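/- arXiv:1011.4572 — 13 statements merged into one kernel-verified Lean document; each statement's English description precedes it below -/
import Mathlib

section
/- If G is a connected graph and H1, ..., Hk is a partition of the vertex set of G into parts each inducing a connected subgraph, then rc(G) ≤ k - 1 + Σ_{i=1}^k rc(Hi). -/
open SimpleGraph

/-- A graph `G` is rainbow connected under edge-coloring `c` if any two vertices are
joined by a path whose edges receive pairwise distinct colors. -/
def RainbowConnected {V : Type*} (G : SimpleGraph V) (c : Sym2 V → ℕ) : Prop :=
  ∀ u v : V, ∃ p : G.Walk u v, p.IsPath ∧ (p.edges.map c).Nodup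

/-- The rainbow connection number: the least number of colors in an edge-coloring
making `G` rainbow connected. -/
noncomputable def rc {V : Type*} [Fintype V] (G : SimpleGraph V) : ℕ :=
  sInf {n | ∃ c : Sym2 V → ℕ, (∀ e ∈ G.edgeSet, c e < n) ∧ RainbowConnected G c}

/-- Least `n` with `n ^ s ≥ t`, i.e. `⌈t^(1/s)⌉`. -/
noncomputable def ceilRoot (s t : ℕ) : ℕ := sInf {n | t ≤ n ^ s}

/-!
Give every part `Hᵢ` its own palette of `rc(Hᵢ)` colours and connect the parts along `k - 1`
edges of a spanning tree of the quotient graph, each with a fresh colour. The tree is built by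
repeatedly attaching to the current cluster `A` a part `B` joined to it by an edge `ab`: a
rainbow walk from `u ∈ A` to `v ∈ B` runs inside `A` to `a`, crosses `ab` and continues inside
`B` to `v`, and its three stretches use disjoint palettes.
-/

open Function

section

variable {V : Type*} {G : SimpleGraph V}

lemma SimpleGraph.Walk.mem_support_of_mem_of_mem_edges {u v x : V} {p : G.Walk u v}
    {e : Sym2 V} (he : e ∈ p.edges) (hx : x ∈ e) : x ∈ p.support := by
  induction e with
  | h a b =>
    rcases Sym2.mem_iff.1 hx with rfl | rfl
    exacts [p.fst_mem_support_of_mem_edges he, p.snd_mem_support_of_mem_edges he]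

/-- Rainbow connectivity of `G[S]` with fewer than `n` colours, witnessed by a colouring of all
of `G` so that colourings of disjoint parts can be glued. -/
structure IsRainbowOn (G : SimpleGraph V) (S : Set V) (c : Sym2 V → ℕ) (n : ℕ) : Prop where
  lt : ∀ ⦃u v⦄, u ∈ S → v ∈ S → G.Adj u v → c s(u, v) < n
  exists_walk : ∀ ⦃u v⦄, u ∈ S → v ∈ S →
    ∃ p : G.Walk u v, (∀ x ∈ p.support, x ∈ S) ∧ (p.edges.map c).Nodup

section Glue

variable (A B : Set V) (cA cB : Sym2 V → ℕ) (nA nB : ℕ)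

open Classical in
noncomputable def glueColoring (e : Sym2 V) : ℕ :=
  if ∀ x ∈ e, x ∈ A then cA e else if ∀ x ∈ e, x ∈ B then nA + cB e else nA + nB

variable {A B cA cB nA nB}

lemma glueColoring_of_forall_mem_left {e : Sym2 V} (he : ∀ x ∈ e, x ∈ A) :
    glueColoring A B cA cB nA nB e = cA e := by
  simp only [glueColoring, if_pos he]

lemma glueColoring_of_forall_mem_right (hAB : Disjoint A B) {e : Sym2 V}
    (he : ∀ x ∈ e, x ∈ B) : glueColoring A B cA cB nA nB e = nA + cB e := by
  have hnA : ¬ ∀ x ∈ e, x ∈ A := by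
    induction e with
    | h x y =>
      exact fun h => Set.disjoint_left.1 hAB (h x (Sym2.mem_mk_left x y))
        (he x (Sym2.mem_mk_left x y))
  simp only [glueColoring, if_neg hnA, if_pos he]

lemma glueColoring_mk (hAB : Disjoint A B) {a b : V} (ha : a ∈ A) (hb : b ∈ B) :
    glueColoring A B cA cB nA nB s(a, b) = nA + nB := by
  have hnA : ¬ ∀ x ∈ s(a, b), x ∈ A := fun h =>
    Set.disjoint_left.1 hAB (h b (Sym2.mem_mk_right a b)) hb
  have hnB : ¬ ∀ x ∈ s(a, b), x ∈ B := fun h =>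
    Set.disjoint_left.1 hAB ha (h a (Sym2.mem_mk_left a b))
  simp only [glueColoring, if_neg hnA, if_neg hnB]

lemma map_edges_glueColoring_left {u v : V} {p : G.Walk u v} (hp : ∀ x ∈ p.support, x ∈ A) :
    p.edges.map (glueColoring A B cA cB nA nB) = p.edges.map cA :=
  List.map_congr_left fun _ he => glueColoring_of_forall_mem_left fun _ hx =>
    hp _ (p.mem_support_of_mem_of_mem_edges he hx)

lemma map_edges_glueColoring_right (hAB : Disjoint A B) {u v : V} {p : G.Walk u v}
    (hp : ∀ x ∈ p.support, x ∈ B) :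
    p.edges.map (glueColoring A B cA cB nA nB) = (p.edges.map cB).map (nA + ·) := by
  rw [List.map_map]
  exact List.map_congr_left fun _ he => glueColoring_of_forall_mem_right hAB fun _ hx =>
    hp _ (p.mem_support_of_mem_of_mem_edges he hx)

end Glue

namespace IsRainbowOn

variable {S A B : Set V} {c cA cB : Sym2 V → ℕ} {n nA nB : ℕ}

lemma lt_of_mem_edges (h : IsRainbowOn G S c n) {u v : V} {p : G.Walk u v}
    (hp : ∀ x ∈ p.support, x ∈ S) {e : Sym2 V} (he : e ∈ p.edges) : c e < n := by
  induction e with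
  | h x y =>
    exact h.lt (hp _ (p.fst_mem_support_of_mem_edges he))
      (hp _ (p.snd_mem_support_of_mem_edges he)) (p.adj_of_mem_edges he)


lemma exists_walk_glueColoring (hA : IsRainbowOn G A cA nA) (hB : IsRainbowOn G B cB nB)
    (hAB : Disjoint A B) {a b : V} (ha : a ∈ A) (hb : b ∈ B) (hab : G.Adj a b) {u v : V}
    (hu : u ∈ A) (hv : v ∈ B) : ∃ p : G.Walk u v, (∀ x ∈ p.support, x ∈ A ∪ B) ∧
      (p.edges.map (glueColoring A B cA cB nA nB)).Nodup := by
  obtain ⟨p, hpA, hp⟩ := hA.exists_walk hu ha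
  obtain ⟨q, hqB, hq⟩ := hB.exists_walk hb hv
  refine ⟨p.append (.cons hab q), fun x hx => ?_, ?_⟩
  · rw [Walk.mem_support_append_iff, Walk.support_cons, List.mem_cons] at hx
    rcases hx with hx | hx | hx
    exacts [.inl (hpA x hx), .inl (hx ▸ ha), .inr (hqB x hx)]
  rw [Walk.edges_append, Walk.edges_cons, List.map_append, List.map_cons,
    map_edges_glueColoring_left hpA, glueColoring_mk hAB ha hb,
    map_edges_glueColoring_right hAB hqB, List.nodup_append, List.nodup_cons]
  have hp_lt : ∀ m ∈ p.edges.map cA, m < nA := by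
    simpa using fun e he => hA.lt_of_mem_edges hpA he
  have hq_lt : ∀ m ∈ q.edges.map cB, m < nB := by
    simpa using fun e he => hB.lt_of_mem_edges hqB he
  refine ⟨hp, ⟨fun h => ?_, hq.map (add_right_injective nA)⟩, fun m hm m' hm' => ?_⟩
  · obtain ⟨m, hm, hm_eq⟩ := List.mem_map.1 h
    have := hq_lt m hm
    omega
  · have := hp_lt m hm
    rcases List.mem_cons.1 hm' with rfl | hm'
    · omega
    · obtain ⟨m', -, rfl⟩ := List.mem_map.1 hm'
      omega

theorem union (hA : IsRainbowOn G A cA nA) (hB : IsRainbowOn G B cB nB) (hAB : Disjoint A B)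
    {a b : V} (ha : a ∈ A) (hb : b ∈ B) (hab : G.Adj a b) :
    IsRainbowOn G (A ∪ B) (glueColoring A B cA cB nA nB) (nA + nB + 1) := by
  refine ⟨fun u v _ _ huv => ?_, fun u v hu hv => ?_⟩
  · unfold glueColoring
    split_ifs with hsA hsB
    · have := hA.lt (hsA u (Sym2.mem_mk_left u v)) (hsA v (Sym2.mem_mk_right u v)) huv
      omega
    · have := hB.lt (hsB u (Sym2.mem_mk_left u v)) (hsB v (Sym2.mem_mk_right u v)) huv
      omega
    · omega
  rcases hu with hu | hu <;> rcases hv with hv | hv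
  · obtain ⟨p, hpA, hp⟩ := hA.exists_walk hu hv
    exact ⟨p, fun x hx => .inl (hpA x hx), by rwa [map_edges_glueColoring_left hpA]⟩
  · exact exists_walk_glueColoring hA hB hAB ha hb hab hu hv
  · obtain ⟨p, hpS, hp⟩ := exists_walk_glueColoring hA hB hAB ha hb hab hv hu
    exact ⟨p.reverse, by simpa using hpS, by simpa [Walk.edges_reverse] using hp⟩
  · obtain ⟨p, hpB, hp⟩ := hB.exists_walk hu hv
    refine ⟨p, fun x hx => .inr (hpB x hx), ?_⟩
    rw [map_edges_glueColoring_right hAB hpB]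
    exact hp.map (add_right_injective nA)

end IsRainbowOn

lemma exists_rainbowConnected_rc [Fintype V] (hG : G.Connected) :
    ∃ c : Sym2 V → ℕ, (∀ e ∈ G.edgeSet, c e < rc G) ∧ RainbowConnected G c := by
  classical
  suffices h : {n | ∃ c : Sym2 V → ℕ, (∀ e ∈ G.edgeSet, c e < n) ∧
      RainbowConnected G c}.Nonempty from Nat.sInf_mem h
  obtain ⟨N, ⟨f⟩⟩ := Finite.exists_equiv_fin (Sym2 V)
  refine ⟨N, fun e => f e, fun e _ => (f e).2, fun u v => ?_⟩
  let p := (hG.preconnected u v).some.toPath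
  exact ⟨p, p.2, p.2.edges_nodup.map (Fin.val_injective.comp f.injective)⟩

lemma exists_isRainbowOn_rc_induce {S : Set V} [Fintype S] (hS : (G.induce S).Connected) :
    ∃ c, IsRainbowOn G S c (rc (G.induce S)) := by
  obtain ⟨c, hc_lt, hc⟩ := exists_rainbowConnected_rc hS
  have hval : Injective (Sym2.map ((↑) : S → V)) := Sym2.map.injective Subtype.val_injective
  have hext : extend (Sym2.map (↑)) c 0 ∘ Sym2.map ((↑) : S → V) = c :=
    funext (hval.extend_apply c 0)
  refine ⟨extend (Sym2.map (↑)) c 0, fun u v hu hv huv => ?_, fun u v hu hv => ?_⟩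
  · exact (hval.extend_apply c 0 s(⟨u, hu⟩, ⟨v, hv⟩)).trans_lt (hc_lt _ huv)
  · obtain ⟨p, -, hp⟩ := hc ⟨u, hu⟩ ⟨v, hv⟩
    let q : G.Walk u v := p.map (Embedding.induce S).toHom
    have hq_support : q.support = p.support.map (↑) := Walk.support_map _ _
    have hq_edges : q.edges = p.edges.map (Sym2.map (↑)) := Walk.edges_map _ _
    refine ⟨q, fun x hx => ?_, ?_⟩
    · obtain ⟨y, -, rfl⟩ := List.mem_map.1 (hq_support ▸ hx)
      exact y.2
    rwa [hq_edges, List.map_map, hext]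

lemma rc_le_of_isRainbowOn_univ [Fintype V] {c : Sym2 V → ℕ} {n : ℕ}
    (h : IsRainbowOn G Set.univ c n) : rc G ≤ n := by
  classical
  refine Nat.sInf_le ⟨c, fun e he => ?_, fun u v => ?_⟩
  · induction e with
    | h u v => exact h.lt trivial trivial he
  · obtain ⟨p, -, hp⟩ := h.exists_walk trivial trivial
    exact ⟨p.bypass, p.bypass_isPath, hp.sublist (p.edges_bypass_sublist_edges.map c)⟩

lemma SimpleGraph.Connected.exists_adj_mem_notMem (hG : G.Connected) {S : Set V} {x y : V}
    (hx : x ∈ S) (hy : y ∉ S) : ∃ a ∈ S, ∃ b ∉ S, G.Adj a b := by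
  obtain ⟨d, -, hd₁, hd₂⟩ := (hG x y).some.exists_boundary_dart S hx hy
  exact ⟨d.fst, hd₁, d.snd, hd₂, d.adj⟩

section Partition

variable {ι : Type*} [Fintype ι] [DecidableEq ι] {H : ι → Set V} {n : ι → ℕ}

theorem exists_isRainbowOn_biUnion (hG : G.Connected) (hdisj : Pairwise (Disjoint on H))
    (hcover : ∀ v, ∃ i, v ∈ H i) (hne : ∀ i, (H i).Nonempty)
    (hH : ∀ i, ∃ c, IsRainbowOn G (H i) c (n i)) {m : ℕ} (hm : m < Fintype.card ι) :
    ∃ T : Finset ι, T.card = m + 1 ∧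
      ∃ c, IsRainbowOn G (⋃ i ∈ T, H i) c (m + ∑ i ∈ T, n i) := by
  induction m with
  | zero =>
    obtain ⟨i⟩ := Fintype.card_pos_iff.1 hm
    exact ⟨{i}, rfl, by simpa using hH i⟩
  | succ m ih =>
    obtain ⟨T, hT, c, hc⟩ := ih (by omega)
    obtain ⟨i, hi⟩ : T.Nonempty := Finset.card_pos.1 (by omega)
    obtain ⟨j₀, -, hj₀⟩ :=
      Finset.exists_mem_notMem_of_card_lt_card (s := T) (t := Finset.univ)
        (by rw [Finset.card_univ]; omega)
    have hdisjT : ∀ j ∉ T, Disjoint (⋃ i ∈ T, H i) (H j) :=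
      fun j hj => Set.disjoint_iUnion₂_left.2 fun i hi => hdisj (ne_of_mem_of_not_mem hi hj)
    obtain ⟨x, hx⟩ := hne i
    obtain ⟨y, hy⟩ := hne j₀
    obtain ⟨a, ha, b, hb, hab⟩ := hG.exists_adj_mem_notMem (Set.mem_biUnion hi hx)
      (Set.disjoint_right.1 (hdisjT j₀ hj₀) hy)
    obtain ⟨j, hbj⟩ := hcover b
    have hj : j ∉ T := fun hj => hb (Set.mem_biUnion hj hbj)
    obtain ⟨cj, hcj⟩ := hH j
    refine ⟨insert j T, by rw [Finset.card_insert_of_notMem hj, hT], ?_⟩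
    rw [Finset.set_biUnion_insert, Set.union_comm, Finset.sum_insert hj]
    exact ⟨_, by convert hc.union hcj (hdisjT j hj) ha hbj hab using 1; omega⟩

theorem exists_isRainbowOn_univ (hG : G.Connected) (hdisj : Pairwise (Disjoint on H))
    (hcover : ∀ v, ∃ i, v ∈ H i) (hne : ∀ i, (H i).Nonempty)
    (hH : ∀ i, ∃ c, IsRainbowOn G (H i) c (n i)) :
    ∃ c, IsRainbowOn G Set.univ c (Fintype.card ι - 1 + ∑ i, n i) := by
  obtain ⟨v⟩ := hG.nonempty
  have : Nonempty ι := ⟨(hcover v).choose⟩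
  obtain ⟨T, hT, hc⟩ :=
    exists_isRainbowOn_biUnion hG hdisj hcover hne hH (Nat.sub_one_lt Fintype.card_ne_zero)
  obtain rfl : T = Finset.univ :=
    Finset.eq_univ_of_card T (by have := Fintype.card_pos (α := ι); omega)
  simpa [Set.iUnion_eq_univ_iff.2 hcover] using hc

end Partition

end

theorem rc_le_of_partition_general {V : Type*} [Fintype V] (G : SimpleGraph V)
    (hG : G.Connected) (k : ℕ) (H : Fin k → Finset V)
    (hpart : ∀ v : V, ∃! i, v ∈ H i)
    (hconn : ∀ i, (G.induce (H i : Set V)).Connected) :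
    rc G ≤ k - 1 + ∑ i, rc (G.induce (H i : Set V)) := by
  have hdisj : Pairwise (Disjoint on fun i => (H i : Set V)) := fun i j hij =>
    Set.disjoint_left.2 fun v hi hj => hij ((hpart v).unique hi hj)
  obtain ⟨c, hc⟩ := exists_isRainbowOn_univ hG hdisj (fun v => (hpart v).exists)
    (fun i => Set.nonempty_coe_sort.1 (hconn i).nonempty)
    (fun i => exists_isRainbowOn_rc_induce (hconn i))
  simpa using rc_le_of_isRainbowOn_univ hc

/-- rc(G) ≤ k - 1 + Σ rc(H i) for a partition into connected induced subgraphs. -/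
theorem rc_le_of_partition {V : Type*} [Fintype V] [DecidableEq V] (G : SimpleGraph V)
    (hG : G.Connected) (k : ℕ) (H : Fin k → Finset V)
    (hpart : ∀ v : V, ∃! i, v ∈ H i)
    (hconn : ∀ i, (G.induce (H i : Set V)).Connected) :
    rc G ≤ k - 1 + ∑ i, rc (G.induce (H i : Set V)) :=
  rc_le_of_partition_general G hG k H hpart hconn
end

section
/- For a connected graph G with at least 2 vertices and m edges, rc(G) = m if and only if G is a tree. -/
/-! If `G` is not a tree, some edge `e` lies on a cycle, so `G - e` is a connected spanning
subgraph; colouring its `m - 1` edges injectively and giving `e` any of these colours is a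
rainbow colouring, hence `rc G < m`. If `G` is a tree, every edge is a bridge, and for two
distinct bridges `e`, `f` one can pick an endpoint `u` of `e` and an endpoint `v` of `f` that
both `e` and `f` separate. Every `u`–`v` path, in particular a rainbow one, then runs through
`e` and `f`, so a rainbow colouring is injective on the edges and `rc G ≥ m`. -/

open SimpleGraph

section

variable {V : Type*} {G H : SimpleGraph V} {c : Sym2 V → ℕ}

theorem RainbowConnected.mono (hHG : H ≤ G) (h : RainbowConnected H c) :
    RainbowConnected G c := by
  intro u v
  obtain ⟨p, hp, hc⟩ := h u v
  exact ⟨p.mapLe hHG, (Walk.isPath_mapLe hHG).mpr hp, by rwa [Walk.edges_mapLe_eq_edges]⟩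

theorem SimpleGraph.Connected.rainbowConnected_of_injOn (hG : G.Connected)
    (hc : Set.InjOn c G.edgeSet) : RainbowConnected G c := by
  intro u v
  obtain ⟨p, hp⟩ := hG.exists_isPath u v
  exact ⟨p, hp, hp.isTrail.edges_nodup.map_on fun e he f hf ↦
    hc (p.edges_subset_edgeSet he) (p.edges_subset_edgeSet hf)⟩

theorem SimpleGraph.Reachable.deleteEdges_or {v a : V} (b : V) (h : G.Reachable v a) :
    (G.deleteEdges {s(a, b)}).Reachable v a ∨ (G.deleteEdges {s(a, b)}).Reachable v b := by
  rw [reachable_iff_reflTransGen] at h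
  induction h using Relation.ReflTransGen.head_induction_on with
  | refl => exact .inl .rfl
  | @head v w hvw _ ih =>
    by_cases hvw' : s(v, w) = s(a, b)
    · rcases Sym2.eq_iff.mp hvw' with ⟨rfl, -⟩ | ⟨rfl, -⟩
      exacts [.inl .rfl, .inr .rfl]
    · have hvw : (G.deleteEdges {s(a, b)}).Adj v w := by simpa [hvw'] using hvw
      exact ih.imp hvw.reachable.trans hvw.reachable.trans

theorem RainbowConnected.apply_ne_of_isBridge (hG : G.Connected) (hc : RainbowConnected G c)
    {e f : Sym2 V} (he : G.IsBridge e) (hf : G.IsBridge f) (hef : e ≠ f) : c e ≠ c f := by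
  induction e with | h a b =>
  induction f with | h x y =>
  suffices ∃ u v, (∀ p : G.Walk u v, s(a, b) ∈ p.edges) ∧
      (∀ p : G.Walk u v, s(x, y) ∈ p.edges) by
    obtain ⟨u, v, hue, hvf⟩ := this
    obtain ⟨p, -, hp⟩ := hc u v
    exact fun hcef ↦ hef (List.inj_on_of_nodup_map hp (hue p) (hvf p) hcef)
  simp only [← not_exists_not, ← reachable_deleteEdges_iff_exists_walk]
  have key {a' b' x' y' : V} (h₁ : ¬(G.deleteEdges {s(a, b)}).Reachable a' b')
      (h₂ : ¬(G.deleteEdges {s(x, y)}).Reachable x' y')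
      (hya : (G.deleteEdges {s(a, b)}).Reachable y' a')
      (hbx : (G.deleteEdges {s(x, y)}).Reachable b' x') :
      ∃ u v, ¬(G.deleteEdges {s(a, b)}).Reachable u v ∧
        ¬(G.deleteEdges {s(x, y)}).Reachable u v :=
    ⟨b', y', fun h ↦ h₁ (h.trans hya).symm, fun h ↦ h₂ (hbx.symm.trans h)⟩
  have hab : ¬(G.deleteEdges {s(a, b)}).Reachable a b := isBridge_iff.mp he
  have hxy : ¬(G.deleteEdges {s(x, y)}).Reachable x y := isBridge_iff.mp hf
  have hxy_ab : (G.deleteEdges {s(a, b)}).Reachable x y := by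
    have hadj : G.Adj x y := hf.reachable_iff_adj.mp (hG.preconnected x y)
    exact Adj.reachable (by simpa [hadj] using hef.symm)
  rcases (hG.preconnected y a).deleteEdges_or b with hya | hyb
  · rcases (hG.preconnected b x).deleteEdges_or y with hbx | hby
    · exact key hab hxy hya hbx
    · exact key hab (hxy ·.symm) (hxy_ab.trans hya) hby
  · rcases (hG.preconnected a x).deleteEdges_or y with hax | hay
    · exact key (hab ·.symm) hxy hyb hax
    · exact key (hab ·.symm) (hxy ·.symm) (hxy_ab.trans hyb) hay

open Finset

theorem exists_rainbowConnected_lt_card_edgeFinset_of_le [Fintype H.edgeSet] (hHG : H ≤ G)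
    (hH : H.Connected) :
    ∃ c : Sym2 V → ℕ, (∀ e ∈ G.edgeSet, c e < #H.edgeFinset) ∧
      RainbowConnected G c := by
  classical
  let c : Sym2 V → ℕ := fun e ↦
    if h : e ∈ H.edgeFinset then H.edgeFinset.equivFin ⟨e, h⟩ else 0
  refine ⟨c, fun e he ↦ ?_, (hH.rainbowConnected_of_injOn fun e he f hf hef ↦ ?_).mono hHG⟩
  · by_cases h : e ∈ H.edgeFinset
    · simp only [c, dif_pos h, Fin.is_lt]
    · -- an edge of `G` makes `V` nontrivial, so the connected `H` has an edge
      simp only [c, dif_neg h, card_pos]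
      induction e with | h u v =>
      have := (G.mem_edgeSet.mp he).nontrivial
      obtain ⟨w, hw⟩ := hH.preconnected.exists_adj_of_nontrivial u
      exact ⟨s(u, w), H.mem_edgeFinset.mpr hw⟩
  · rw [← mem_edgeFinset] at he hf
    simpa only [c, dif_pos he, dif_pos hf, Fin.val_inj, Equiv.apply_eq_iff_eq, Subtype.mk.injEq]
      using hef

variable [Fintype V]

theorem rc_le_card_edgeFinset_of_le [Fintype H.edgeSet] (hHG : H ≤ G) (hH : H.Connected) :
    rc G ≤ #H.edgeFinset :=
  Nat.sInf_le (exists_rainbowConnected_lt_card_edgeFinset_of_le hHG hH)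

theorem SimpleGraph.Connected.exists_rainbowConnected_lt_rc (hG : G.Connected) :
    ∃ c : Sym2 V → ℕ, (∀ e ∈ G.edgeSet, c e < rc G) ∧ RainbowConnected G c := by
  classical
  exact Nat.sInf_mem
    (s := {n | ∃ c : Sym2 V → ℕ, (∀ e ∈ G.edgeSet, c e < n) ∧ RainbowConnected G c})
    ⟨_, exists_rainbowConnected_lt_card_edgeFinset_of_le le_rfl hG⟩

theorem SimpleGraph.IsTree.card_edgeFinset_le_rc [Fintype G.edgeSet] (hG : G.IsTree) :
    #G.edgeFinset ≤ rc G := by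
  obtain ⟨c, hlt, hc⟩ := hG.connected.exists_rainbowConnected_lt_rc
  have hbridge {e} (he : e ∈ G.edgeFinset) : G.IsBridge e :=
    isAcyclic_iff_forall_isBridge.mp hG.isAcyclic (mem_edgeFinset.mp he)
  calc #G.edgeFinset ≤ #(range (rc G)) :=
        card_le_card_of_injOn c (fun e he ↦ mem_range.mpr (hlt e (mem_edgeFinset.mp he)))
          fun e he f hf hef ↦ by_contra fun hne ↦
            hc.apply_ne_of_isBridge hG.connected (hbridge he) (hbridge hf) hne hef
    _ = rc G := card_range _

theorem SimpleGraph.Connected.rc_lt_card_edgeFinset_of_not_isAcyclic [Fintype G.edgeSet]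
    (hG : G.Connected) (h : ¬G.IsAcyclic) : rc G < #G.edgeFinset := by
  classical
  obtain ⟨a, b, hab, hnb⟩ : ∃ a b, G.Adj a b ∧ ¬G.IsBridge s(a, b) := by
    simpa [isAcyclic_iff_forall_adj_isBridge] using h
  calc rc G ≤ #(G.deleteEdges {s(a, b)}).edgeFinset :=
        rc_le_card_edgeFinset_of_le (G.deleteEdges_le _)
          (hG.connected_delete_edge_of_not_isBridge hnb)
    _ < #G.edgeFinset := card_lt_card <| edgeFinset_strict_mono <|
      (G.deleteEdges_le _).lt_of_ne fun h ↦ by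
        have : (G.deleteEdges {s(a, b)}).Adj a b := h.symm ▸ hab
        simp at this

end

theorem rc_eq_edgeCard_iff_isTree_general {V : Type*} [Fintype V]
    (G : SimpleGraph V) [DecidableRel G.Adj] (hG : G.Connected) :
    rc G = G.edgeFinset.card ↔ G.IsTree := by
  refine ⟨fun h ↦ ⟨hG, ?_⟩, fun hT ↦ ?_⟩
  · by_contra hac
    exact (hG.rc_lt_card_edgeFinset_of_not_isAcyclic hac).ne h
  · exact (rc_le_card_edgeFinset_of_le le_rfl hG).antisymm hT.card_edgeFinset_le_rc

/-- rc(G) = m iff G is a tree. -/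
theorem rc_eq_edgeCard_iff_isTree {V : Type*} [Fintype V] [DecidableEq V]
    (G : SimpleGraph V) [DecidableRel G.Adj] (hG : G.Connected) (hV : 2 ≤ Fintype.card V) :
    rc G = G.edgeFinset.card ↔ G.IsTree :=
  rc_eq_edgeCard_iff_isTree_general G hG
end

section
/- For every integer k > 3, the cycle C_k on k vertices has rainbow connection number rc(C_k) = ⌈k/2⌉. -/
open SimpleGraph

/-!
Lower bound: a rainbow path has at most as many edges as there are colours, and `u` and
`u + ⌊k/2⌋` are at distance `⌊k/2⌋`. For odd `k = 2n + 1` coloured with `n` colours, the only path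
of length at most `n` from `u` to `u + n` is the forward arc, so every `n` consecutive edges carry
all `n` colours. The colouring is then `n`-periodic, hence constant since `gcd(n, 2n + 1) = 1`,
which is absurd for `n ≥ 2`.

Upper bound: colour the edge `{x, x + 1}` by `x mod ⌈k/2⌉`. Then every arc of at most `⌊k/2⌋`
edges is rainbow, and one of the two arcs between any two vertices is that short.
-/

section

open Fin.NatCast Fin.CommRing

theorem Nat.mod_eq_or_mod_add_eq_of_lt_two_mul {a m : ℕ} (h : a < 2 * m) :
    a % m = a ∨ a % m + m = a := by
  rcases Nat.lt_or_ge a m with ha | ha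
  · exact Or.inl (Nat.mod_eq_of_lt ha)
  · right
    rw [Nat.mod_eq_sub_mod ha, Nat.mod_eq_of_lt (by omega)]
    omega

theorem Fin.natCast_inj_of_lt {n a b : ℕ} [NeZero n] (h : (a : Fin n) = b) (ha : a < n)
    (hb : b < n) : a = b := by
  simpa [Fin.val_natCast, Nat.mod_eq_of_lt ha, Nat.mod_eq_of_lt hb] using congrArg Fin.val h

theorem Function.periodic_of_nodup_windows {M : Type*} [AddCommMonoidWithOne M] {f : M → ℕ}
    {n : ℕ} (hf : ∀ x, f x < n)
    (hwin : ∀ x, ((List.range n).map fun t : ℕ => f (x + t)).Nodup) :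
    Function.Periodic f n := by
  intro x
  have hperm : ((List.range n).map fun t : ℕ => f (x + 1 + t)).Perm (List.range n) := by
    refine (List.subperm_of_subset (hwin (x + 1)) fun y hy => ?_).perm_of_length_le (by simp)
    obtain ⟨t, -, rfl⟩ := List.mem_map.1 hy
    exact List.mem_range.2 (hf _)
  obtain ⟨t, ht, hfx⟩ := List.mem_map.1 (hperm.mem_iff.2 (List.mem_range.2 (hf x)))
  rw [List.mem_range] at ht
  have hshift : x + 1 + (t : M) = x + ((t + 1 : ℕ) : M) := by push_cast; abel
  rw [hshift] at hfx
  obtain rfl : t + 1 = n := by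
    by_contra hne
    have := List.inj_on_of_nodup_map (hwin x) (List.mem_range.2 (show 0 < n by omega))
      (List.mem_range.2 (show t + 1 < n by omega)) (by simpa using hfx.symm)
    omega
  exact hfx

/- Residues mod `m` of two numbers below `k ≤ 2m` agree only if the numbers differ by `0` or `m`,
while two positions of the window differ by `d` or `k - d` with `0 < d < l`. -/
theorem Fin.nodup_map_range_val_add_mod {k m l : ℕ} [NeZero k] (hkm : k ≤ 2 * m)
    (hl : l + m ≤ k) (u : Fin k) : ((List.range l).map fun t : ℕ => (u + t).val % m).Nodup := by
  refine List.Nodup.map_on (fun t ht t' ht' h => ?_) List.nodup_range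
  rw [List.mem_range] at ht ht'
  rw [Fin.val_add, Fin.val_add, Fin.val_natCast, Fin.val_natCast,
    Nat.mod_eq_of_lt (show t < k by omega), Nat.mod_eq_of_lt (show t' < k by omega)] at h
  have hk : ∀ s < l, u.val + s < 2 * k := fun s _ => by omega
  have hm : ∀ s < l, (u.val + s) % k < 2 * m := fun s _ => (Nat.mod_lt _ (by omega)).trans_le hkm
  rcases Nat.mod_eq_or_mod_add_eq_of_lt_two_mul (hk t ht) with h₁ | h₁ <;>
  rcases Nat.mod_eq_or_mod_add_eq_of_lt_two_mul (hk t' ht') with h₂ | h₂ <;>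
  rcases Nat.mod_eq_or_mod_add_eq_of_lt_two_mul (hm t ht) with h₃ | h₃ <;>
  rcases Nat.mod_eq_or_mod_add_eq_of_lt_two_mul (hm t' ht') with h₄ | h₄ <;>
  omega

theorem Fin.not_forall_nodup_windows {k n : ℕ} [NeZero k] (hkn : k = 2 * n + 1) (hn : 2 ≤ n)
    {f : Fin k → ℕ} (hf : ∀ x, f x < n) :
    ¬ ∀ x, ((List.range n).map fun t : ℕ => f (x + t)).Nodup := by
  intro hwin
  have hnn : (n : Fin k) + n = -1 := by
    rw [eq_neg_iff_add_eq_zero, ← Nat.cast_add, ← Nat.cast_add_one, ← two_mul, ← hkn,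
      Fin.natCast_self]
  have hper : Function.Periodic f 1 := by
    simpa [hnn] using ((Function.periodic_of_nodup_windows hf hwin).add_period
      (Function.periodic_of_nodup_windows hf hwin)).neg
  have := List.inj_on_of_nodup_map (hwin 0) (List.mem_range.2 (show 0 < n by omega))
    (List.mem_range.2 (show 1 < n by omega)) (by simpa using (hper 0).symm)
  omega

namespace SimpleGraph

theorem Walk.length_le_of_nodup_map_edges {V : Type*} {G : SimpleGraph V} {c : Sym2 V → ℕ}
    {n : ℕ} (hc : ∀ e ∈ G.edgeSet, c e < n) {u v : V} (w : G.Walk u v)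
    (hw : (w.edges.map c).Nodup) : w.length ≤ n := by
  have hsub : (w.edges.map c).Subperm (List.range n) :=
    List.subperm_of_subset hw fun x hx => by
      obtain ⟨e, he, rfl⟩ := List.mem_map.1 hx
      exact List.mem_range.2 (hc e (w.edges_subset_edgeSet he))
  simpa using hsub.length_le

variable {k : ℕ} [NeZero k]

theorem cycleGraph_adj_iff_eq_add_one (hk : 1 < k) {u v : Fin k} :
    (cycleGraph k).Adj u v ↔ v = u + 1 ∨ u = v + 1 := by
  have hval : ∀ a b : Fin k, (a - b).val = 1 ↔ a = b + 1 := fun a b => by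
    rw [← sub_eq_iff_eq_add', Fin.ext_iff, Fin.val_one', Nat.mod_eq_of_lt hk]
  rw [cycleGraph_adj', hval, hval, or_comm]

theorem cycleGraph_adj_add_one (hk : 1 < k) (u : Fin k) : (cycleGraph k).Adj u (u + 1) :=
  (cycleGraph_adj_iff_eq_add_one hk).2 (Or.inl rfl)

namespace cycleGraph

theorem exists_eq_of_mem_edgeSet (hk : 1 < k) {e : Sym2 (Fin k)}
    (he : e ∈ (cycleGraph k).edgeSet) : ∃ x, s(x, x + 1) = e := by
  induction e using Sym2.ind with
  | _ u v =>
    rw [mem_edgeSet] at he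
    rcases (cycleGraph_adj_iff_eq_add_one hk).1 he with rfl | rfl
    · exact ⟨u, rfl⟩
    · exact ⟨v, Sym2.eq_swap⟩

theorem injective_edge (hk : 2 < k) : Function.Injective fun x : Fin k => s(x, x + 1) := by
  intro x y hxy
  rcases Sym2.eq_iff.1 hxy with ⟨h, -⟩ | ⟨h₁, h₂⟩
  · exact h
  · have h2 : ((2 : ℕ) : Fin k) = (0 : ℕ) := by push_cast; linear_combination h₂ - h₁
    exact absurd (Fin.natCast_inj_of_lt h2 hk (by omega)) (by norm_num)

def arc (hk : 1 < k) : (u : Fin k) → (d : ℕ) → (cycleGraph k).Walk u (u + d)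
  | u, 0 => Walk.nil.copy rfl (by simp)
  | u, d + 1 =>
    (Walk.cons (cycleGraph_adj_add_one hk u) (arc hk (u + 1) d)).copy rfl (by push_cast; ring)

theorem edges_arc (hk : 1 < k) (u : Fin k) (d : ℕ) :
    (arc hk u d).edges = (List.range d).map fun t : ℕ => s(u + t, u + t + 1) := by
  induction d generalizing u with
  | zero => simp [arc]
  | succ d ih =>
    rw [arc, Walk.edges_copy, Walk.edges_cons, ih, List.range_succ_eq_map, List.map_cons,
      List.map_map]
    congr 1
    · simp
    · refine List.map_congr_left fun t _ => ?_
      have hshift : u + 1 + (t : Fin k) = u + ((t + 1 : ℕ) : Fin k) := by push_cast; ring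
      simp only [Function.comp_apply, Nat.succ_eq_add_one, hshift]

theorem support_arc (hk : 1 < k) (u : Fin k) (d : ℕ) :
    (arc hk u d).support = (List.range (d + 1)).map fun t : ℕ => u + t := by
  induction d generalizing u with
  | zero => simp [arc]
  | succ d ih =>
    rw [arc, Walk.support_copy, Walk.support_cons, ih, List.range_succ_eq_map (n := d + 1),
      List.map_cons, List.map_map]
    congr 1
    · simp
    · refine List.map_congr_left fun t _ => ?_
      have hshift : u + 1 + (t : Fin k) = u + ((t + 1 : ℕ) : Fin k) := by push_cast; ring
      simp only [Function.comp_apply, Nat.succ_eq_add_one, hshift]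

theorem isPath_arc (hk : 1 < k) (u : Fin k) {d : ℕ} (hd : d < k) : (arc hk u d).IsPath := by
  rw [Walk.isPath_def, support_arc]
  refine List.Nodup.map_on (fun t ht t' ht' h => ?_) List.nodup_range
  rw [List.mem_range] at ht ht'
  exact Fin.natCast_inj_of_lt (add_left_cancel h) (by omega) (by omega)

theorem exists_walk_steps (hk : 1 < k) {u v : Fin k} (w : (cycleGraph k).Walk u v) :
    ∃ p q : ℕ, p + q = w.length ∧ (p : Fin k) - q = v - u ∧
      (q = 0 → w.edges = (arc hk u p).edges) := by
  induction w with
  | nil => exact ⟨0, 0, rfl, by simp, fun _ => by simp [arc]⟩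
  | cons h w ih =>
    obtain ⟨p, q, hlen, hdisp, hedges⟩ := ih
    rcases (cycleGraph_adj_iff_eq_add_one hk).1 h with rfl | rfl
    · refine ⟨p + 1, q, by simp; omega, by push_cast; linear_combination hdisp, ?_⟩
      intro hq
      simp [arc, hedges hq]
    · exact ⟨p, q + 1, by simp; omega, by push_cast; linear_combination hdisp, by omega⟩

theorem div_two_le_length (hk : 1 < k) {u : Fin k}
    (w : (cycleGraph k).Walk u (u + (k / 2 : ℕ))) : k / 2 ≤ w.length := by
  obtain ⟨p, q, hlen, hdisp, -⟩ := exists_walk_steps hk w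
  by_contra! hw
  have hcast : (p : Fin k) = (k / 2 + q : ℕ) := by push_cast; linear_combination hdisp
  have : p = k / 2 + q := Fin.natCast_inj_of_lt hcast (by omega) (by omega)
  omega

theorem edges_eq_arc_of_length_le (hk : 1 < k) (hodd : Odd k) {u : Fin k}
    (w : (cycleGraph k).Walk u (u + (k / 2 : ℕ))) (hw : w.length ≤ k / 2) :
    w.edges = (arc hk u (k / 2)).edges := by
  obtain ⟨p, q, hlen, hdisp, hedges⟩ := exists_walk_steps hk w
  have := Nat.odd_iff.1 hodd
  have hcast : (p : Fin k) = (k / 2 + q : ℕ) := by push_cast; linear_combination hdisp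
  have : p = k / 2 + q := Fin.natCast_inj_of_lt hcast (by omega) (by omega)
  obtain rfl : q = 0 := by omega
  obtain rfl : p = k / 2 := by omega
  exact hedges rfl

theorem rainbowConnected_of_nodup_arcs (hk : 1 < k) {c : Sym2 (Fin k) → ℕ}
    (hc : ∀ u l, l ≤ k / 2 → ((arc hk u l).edges.map c).Nodup) :
    RainbowConnected (cycleGraph k) c := by
  intro u v
  have hvu : u + ((v - u).val : ℕ) = v := by rw [Fin.cast_val_eq_self]; ring
  by_cases hd : (v - u).val ≤ k / 2
  · refine ⟨(arc hk u _).copy rfl hvu, ?_, ?_⟩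
    · exact (Walk.isPath_copy _ _ _).2 (isPath_arc hk u (by omega))
    · simpa using hc u _ hd
  · have huv : v + ((k - (v - u).val : ℕ) : Fin k) = u := by
      rw [Nat.cast_sub (v - u).is_lt.le, Fin.natCast_self, Fin.cast_val_eq_self]; ring
    refine ⟨((arc hk v _).copy rfl huv).reverse, ?_, ?_⟩
    · exact ((Walk.isPath_copy _ _ _).2 (isPath_arc hk v (by omega))).reverse
    · simpa using hc v _ (by omega)

theorem exists_rainbowConnected (hk : 2 < k) :
    ∃ c : Sym2 (Fin k) → ℕ, (∀ e ∈ (cycleGraph k).edgeSet, c e < (k + 1) / 2) ∧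
      RainbowConnected (cycleGraph k) c := by
  have hk1 : 1 < k := by omega
  set c := Function.extend (fun x : Fin k => s(x, x + 1)) (fun x => x.val % ((k + 1) / 2)) 0
  have hc : ∀ x : Fin k, c s(x, x + 1) = x.val % ((k + 1) / 2) :=
    (injective_edge hk).extend_apply _ _
  refine ⟨c, fun e he => ?_, rainbowConnected_of_nodup_arcs hk1 fun u l hl => ?_⟩
  · obtain ⟨x, rfl⟩ := exists_eq_of_mem_edgeSet hk1 he
    exact hc x ▸ Nat.mod_lt _ (by omega)
  · rw [edges_arc, List.map_map]
    simp only [Function.comp_def, hc]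
    exact Fin.nodup_map_range_val_add_mod (by omega) (by omega) u

theorem succ_div_two_le_of_rainbowConnected (hk : 3 < k) {c : Sym2 (Fin k) → ℕ} {n : ℕ}
    (hc : ∀ e ∈ (cycleGraph k).edgeSet, c e < n) (hrc : RainbowConnected (cycleGraph k) c) :
    (k + 1) / 2 ≤ n := by
  have hk1 : 1 < k := by omega
  obtain ⟨w, -, hw⟩ := hrc 0 (0 + (k / 2 : ℕ))
  have hdiam : k / 2 ≤ n := (div_two_le_length hk1 w).trans (w.length_le_of_nodup_map_edges hc hw)
  rcases Nat.even_or_odd k with heven | hodd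
  · have := Nat.even_iff.1 heven
    omega
  by_contra! hn
  have hkn : k = 2 * n + 1 := by have := Nat.odd_iff.1 hodd; omega
  refine Fin.not_forall_nodup_windows hkn (by omega)
    (fun x => hc s(x, x + 1) (cycleGraph_adj_add_one hk1 x)) fun u => ?_
  obtain ⟨w, -, hw⟩ := hrc u (u + (k / 2 : ℕ))
  have hlen := w.length_le_of_nodup_map_edges hc hw
  rwa [edges_eq_arc_of_length_le hk1 hodd w (by omega), edges_arc, List.map_map,
    show k / 2 = n by omega] at hw

end cycleGraph
end SimpleGraph

end

/-- rc(C_k) = ⌈k/2⌉ for k > 3. -/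
theorem rc_cycleGraph (k : ℕ) (hk : 3 < k) :
    rc (SimpleGraph.cycleGraph k) = (k + 1) / 2 := by
  have : NeZero k := ⟨by omega⟩
  obtain ⟨c, hc, hrc⟩ := cycleGraph.exists_rainbowConnected (k := k) (by omega)
  exact IsLeast.csInf_eq ⟨⟨c, hc, hrc⟩,
    fun n ⟨c, hc, hrc⟩ => cycleGraph.succ_div_two_le_of_rainbowConnected hk hc hrc⟩
end

section
/- For integers s, t with 2 ≤ s ≤ t, the complete bipartite graph K_{s,t} satisfies rc(K_{s,t}) = min{⌈t^{1/s}⌉, 4}. -/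
open SimpleGraph

/-! ### Auxiliary lemmas -/

section Aux

lemma rainbow0 {V : Type*} {G : SimpleGraph V} {c : Sym2 V → ℕ} (a : V) :
    ∃ p : G.Walk a a, p.IsPath ∧ (p.edges.map c).Nodup := ⟨.nil, by simp⟩

lemma rainbow1 {V : Type*} {G : SimpleGraph V} {c : Sym2 V → ℕ} {a b : V} (h : G.Adj a b) :
    ∃ p : G.Walk a b, p.IsPath ∧ (p.edges.map c).Nodup :=
  ⟨.cons h .nil, by simp [Walk.isPath_def, h.ne]⟩

lemma rainbow2 {V : Type*} {G : SimpleGraph V} {c : Sym2 V → ℕ} {a b d : V}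
    (h1 : G.Adj a b) (h2 : G.Adj b d) (had : a ≠ d)
    (hcol : c s(a, b) ≠ c s(b, d)) :
    ∃ p : G.Walk a d, p.IsPath ∧ (p.edges.map c).Nodup :=
  ⟨.cons h1 (.cons h2 .nil), by simp [Walk.isPath_def, h1.ne, h2.ne, had, hcol]⟩

lemma rainbow4 {V : Type*} {G : SimpleGraph V} {c : Sym2 V → ℕ} {a b d e f : V}
    (h1 : G.Adj a b) (h2 : G.Adj b d) (h3 : G.Adj d e) (h4 : G.Adj e f)
    (hn : List.Nodup [a, b, d, e, f])
    (hcol : List.Nodup [c s(a,b), c s(b,d), c s(d,e), c s(e,f)]) :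
    ∃ p : G.Walk a f, p.IsPath ∧ (p.edges.map c).Nodup :=
  ⟨.cons h1 (.cons h2 (.cons h3 (.cons h4 .nil))), by
    constructor
    · rw [Walk.isPath_def]; simpa using hn
    · simpa using hcol⟩

/-- Build a symmetric edge coloring of the complete bipartite graph from `col`. -/
def bipColor {s t : ℕ} (col : Fin s → Fin t → ℕ) : Sym2 (Fin s ⊕ Fin t) → ℕ :=
  Sym2.lift ⟨fun x y =>
    match x, y with
    | Sum.inl i, Sum.inr v => col i v
    | Sum.inr v, Sum.inl i => col i v
    | _, _ => 0,
    by intro x y; rcases x with i | v <;> rcases y with j | w <;> rfl⟩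

@[simp] lemma bipColor_lr {s t : ℕ} (col : Fin s → Fin t → ℕ) (i : Fin s) (v : Fin t) :
    bipColor col s(Sum.inl i, Sum.inr v) = col i v := rfl

@[simp] lemma bipColor_rl {s t : ℕ} (col : Fin s → Fin t → ℕ) (i : Fin s) (v : Fin t) :
    bipColor col s(Sum.inr v, Sum.inl i) = col i v := rfl

lemma bipColor_lt {s t n : ℕ} (col : Fin s → Fin t → ℕ) (hcol : ∀ i v, col i v < n) :
    ∀ e ∈ (completeBipartiteGraph (Fin s) (Fin t)).edgeSet, bipColor col e < n := by
  intro e he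
  induction e with
  | _ x y =>
    rw [SimpleGraph.mem_edgeSet] at he
    rcases x with i | v <;> rcases y with j | w <;> simp at he ⊢ <;> apply hcol

/-! #### Lower bound -/

lemma walk_short {α β : Type*} {w v : β}
    (p : (completeBipartiteGraph α β).Walk (Sum.inr w) (Sum.inr v))
    (hlen : p.length ≤ 1) : w = v ∧ p.edges = [] := by
  by_cases hnil : p.Nil
  · have h0 : p.length = 0 := Walk.nil_iff_length_eq.1 hnil
    have := Walk.eq_of_length_eq_zero h0
    refine ⟨Sum.inr.inj this, ?_⟩
    have : p.edges.length = 0 := by rw [Walk.length_edges, h0]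
    exact List.length_eq_zero_iff.1 this
  · obtain ⟨x, h1, q, rfl⟩ := Walk.not_nil_iff.1 hnil
    match x, h1 with
    | Sum.inr w2, h1 => simp at h1
    | Sum.inl a, h1 =>
      simp only [Walk.length_cons] at hlen
      have := Walk.eq_of_length_eq_zero (by omega : q.length = 0)
      simp at this

lemma walk_inr_inr {α β : Type*} {u v : β} (hne : u ≠ v)
    (p : (completeBipartiteGraph α β).Walk (Sum.inr u) (Sum.inr v))
    (hlen : p.length ≤ 3) :
    ∃ a : α, p.edges = [s(Sum.inr u, Sum.inl a), s(Sum.inl a, Sum.inr v)] := by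
  obtain ⟨x, h1, p1, rfl⟩ := Walk.exists_eq_cons_of_ne (by simpa using hne) p
  match x, h1 with
  | Sum.inr w, h1 => simp at h1
  | Sum.inl a, h1 =>
    obtain ⟨x2, h2, p2, rfl⟩ := Walk.exists_eq_cons_of_ne (by simp) p1
    match x2, h2 with
    | Sum.inl a2, h2 => simp at h2
    | Sum.inr w, h2 =>
      simp only [Walk.length_cons] at hlen
      obtain ⟨rfl, hedges⟩ := walk_short p2 (by omega)
      exact ⟨a, by simp [hedges]⟩

lemma nodup_length_le {l : List ℕ} {n : ℕ} (hnd : l.Nodup) (hlt : ∀ x ∈ l, x < n) :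
    l.length ≤ n := by
  have h1 : l.toFinset ⊆ Finset.range n := by
    intro x hx
    simp only [List.mem_toFinset] at hx
    exact Finset.mem_range.2 (hlt x hx)
  have := Finset.card_le_card h1
  rwa [List.toFinset_card_of_nodup hnd, Finset.card_range] at this

lemma lower_bound {s t n : ℕ} (hs : 2 ≤ s) (hst : s ≤ t) (hn : n ≤ 3)
    (c : Sym2 (Fin s ⊕ Fin t) → ℕ)
    (hc : ∀ e ∈ (completeBipartiteGraph (Fin s) (Fin t)).edgeSet, c e < n)
    (hrc : RainbowConnected (completeBipartiteGraph (Fin s) (Fin t)) c) :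
    t ≤ n ^ s := by
  have hadj : ∀ (i : Fin s) (v : Fin t),
      (completeBipartiteGraph (Fin s) (Fin t)).Adj (Sum.inl i) (Sum.inr v) := by simp
  set f : Fin t → (Fin s → Fin n) := fun v i =>
    ⟨c s(Sum.inl i, Sum.inr v),
      hc _ ((completeBipartiteGraph (Fin s) (Fin t)).mem_edgeSet.2 (hadj i v))⟩ with hf
  have finj : Function.Injective f := by
    intro u v huv
    by_contra hne
    have hne' : u ≠ v := fun h => hne (by rw [h])
    obtain ⟨p, hp, hnd⟩ := hrc (Sum.inr u) (Sum.inr v)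
    have hlt : ∀ x ∈ p.edges.map c, x < n := by
      intro x hx
      obtain ⟨e, he, rfl⟩ := List.mem_map.1 hx
      exact hc e (p.edges_subset_edgeSet he)
    have hlen : p.length ≤ 3 := by
      have := nodup_length_le hnd hlt
      simp only [List.length_map, Walk.length_edges] at this
      omega
    obtain ⟨a, hedges⟩ := walk_inr_inr hne' p hlen
    rw [hedges] at hnd
    simp only [List.map_cons, List.map_nil, List.nodup_cons, List.mem_singleton,
      List.nodup_nil, and_true, List.not_mem_nil, not_false_iff] at hnd
    apply hnd
    have h1 : s(Sum.inr u, Sum.inl a) = s(Sum.inl a, (Sum.inr u : Fin s ⊕ Fin t)) := Sym2.eq_swap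
    rw [h1]
    have : f u a = f v a := by rw [huv]
    simpa [hf, Fin.ext_iff] using this
  have := Fintype.card_le_of_injective f finj
  simpa using this

/-! #### Upper bound with `n` colors when `t ≤ n ^ s` -/

lemma exists_good_injection {s t n : ℕ} (hs : 2 ≤ s) (hst : s ≤ t) (hn : 2 ≤ n)
    (htn : t ≤ n ^ s) :
    ∃ g : Fin t → (Fin s → Fin n), Function.Injective g ∧
      ∀ i j : Fin s, i ≠ j → ∃ v : Fin t, g v i ≠ g v j := by
  have h0 : (0 : ℕ) < n := by omega
  set z : Fin s := ⟨0, by omega⟩ with hz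
  have h1 : (1 : ℕ) < n := by omega
  set h : Fin s → (Fin s → Fin n) := fun k i =>
    if k ≠ z ∧ i = k then ⟨1, h1⟩ else ⟨0, h0⟩ with hh
  have hval1 : ∀ k : Fin s, k ≠ z → h k k = ⟨1, h1⟩ := by
    intro k hk; simp [hh, hk]
  have hval0 : ∀ k i : Fin s, i ≠ k → h k i = ⟨0, h0⟩ := by
    intro k i hik; simp [hh, hik]
  have hinj : Function.Injective h := by
    intro k k' hkk
    by_contra hne
    rcases eq_or_ne k z with rfl | hk0
    · have hk' : k' ≠ z := fun h => hne h.symm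
      have := congrFun hkk k'
      rw [hval1 k' hk', hval0 z k' hk'] at this
      simp at this
    · have := congrFun hkk k
      rcases eq_or_ne k' k with h' | h'
      · exact hne h'.symm
      · rw [hval1 k hk0, hval0 k' k (fun hx => h' hx.symm)] at this
        simp at this
  classical
  set A : Finset (Fin s → Fin n) := Finset.univ.image h with hA
  have hcardA : A.card = s := by
    rw [hA, Finset.card_image_of_injective _ hinj, Finset.card_univ, Fintype.card_fin]
  have hcardc : Fintype.card ↥(Aᶜ : Finset (Fin s → Fin n)) = n ^ s - s := by
    rw [Fintype.card_coe, Finset.card_compl, hcardA]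
    congr 1
    simp [Fintype.card_fun]
  have hle : Fintype.card (Fin (t - s)) ≤ Fintype.card ↥(Aᶜ : Finset (Fin s → Fin n)) := by
    rw [hcardc, Fintype.card_fin]; omega
  obtain ⟨e⟩ := Function.Embedding.nonempty_of_card_le hle
  set g : Fin t → (Fin s → Fin n) := fun v =>
    if hv : (v : ℕ) < s then h ⟨v, hv⟩ else (e ⟨(v : ℕ) - s, by omega⟩ : Fin s → Fin n)
    with hg
  have hrange : ∀ k : Fin s, g ⟨k, lt_of_lt_of_le k.2 hst⟩ = h k := by
    intro k
    simp only [hg]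
    rw [dif_pos k.2]
  refine ⟨g, ?_, ?_⟩
  · intro v w hvw
    simp only [hg] at hvw
    split_ifs at hvw with hv hw hw
    · have h2 := hinj hvw
      have h3 : (v : ℕ) = w := by simpa using congrArg Fin.val h2
      exact Fin.ext h3
    · exfalso
      have hmem : h ⟨v, hv⟩ ∈ A := Finset.mem_image_of_mem h (Finset.mem_univ _)
      have hmem' := (e ⟨(w : ℕ) - s, by omega⟩).2
      rw [← hvw] at hmem'
      exact (Finset.mem_compl.1 hmem') hmem
    · exfalso
      have hmem : h ⟨w, hw⟩ ∈ A := Finset.mem_image_of_mem h (Finset.mem_univ _)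
      have hmem' := (e ⟨(v : ℕ) - s, by omega⟩).2
      rw [hvw] at hmem'
      exact (Finset.mem_compl.1 hmem') hmem
    · have h2 := e.injective (Subtype.ext hvw)
      have h3 : (v : ℕ) - s = (w : ℕ) - s := by simpa using congrArg Fin.val h2
      exact Fin.ext (by omega)
  · intro i j hij
    rcases eq_or_ne j z with rfl | hj0
    · have hi0 : i ≠ z := hij
      refine ⟨⟨i, lt_of_lt_of_le i.2 hst⟩, ?_⟩
      rw [hrange i, hval1 i hi0, hval0 i z (fun h => hi0 h.symm)]
      simp
    · refine ⟨⟨j, lt_of_lt_of_le j.2 hst⟩, ?_⟩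
      rw [hrange j, hval1 j hj0, hval0 j i hij]
      simp

lemma upper_n {s t n : ℕ} (hs : 2 ≤ s) (hst : s ≤ t) (hn : 2 ≤ n) (htn : t ≤ n ^ s) :
    ∃ c : Sym2 (Fin s ⊕ Fin t) → ℕ,
      (∀ e ∈ (completeBipartiteGraph (Fin s) (Fin t)).edgeSet, c e < n) ∧
      RainbowConnected (completeBipartiteGraph (Fin s) (Fin t)) c := by
  obtain ⟨g, ginj, gsep⟩ := exists_good_injection hs hst hn htn
  set col : Fin s → Fin t → ℕ := fun i v => (g v i : ℕ) with hcol
  refine ⟨bipColor col, bipColor_lt col (fun i v => (g v i).2), ?_⟩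
  intro x y
  rcases x with i | a <;> rcases y with j | b
  · rcases eq_or_ne i j with rfl | hij
    · exact rainbow0 _
    · obtain ⟨v, hv⟩ := gsep i j hij
      refine rainbow2 (b := Sum.inr v) (by simp) (by simp) (by simp [hij]) ?_
      simp only [bipColor_lr, bipColor_rl, hcol]
      exact fun h => hv (Fin.ext h)
  · exact rainbow1 (by simp)
  · exact rainbow1 (by simp)
  · rcases eq_or_ne a b with rfl | hab
    · exact rainbow0 _
    · have hgab : g a ≠ g b := fun h => hab (ginj h)
      have : ∃ i, g a i ≠ g b i := by
        by_contra hcon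
        push_neg at hcon
        exact hgab (funext hcon)
      obtain ⟨i, hi⟩ := this
      refine rainbow2 (b := Sum.inl i) (by simp) (by simp) (by simp [hab]) ?_
      simp only [bipColor_lr, bipColor_rl, hcol]
      exact fun h => hi (Fin.ext h)

/-! #### Upper bound with 4 colors -/

/-- The 4-coloring. -/
def col4 {s t : ℕ} (i : Fin s) (v : Fin t) : ℕ :=
  if (v : ℕ) = 0 then (if (i : ℕ) = 0 then 0 else if (i : ℕ) = 1 then 2 else 1)
  else (if (i : ℕ) = 0 then 1 else if (i : ℕ) = 1 then 3 else 0)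

lemma upper_4 {s t : ℕ} (hs : 2 ≤ s) (ht : 2 ≤ t) :
    ∃ c : Sym2 (Fin s ⊕ Fin t) → ℕ,
      (∀ e ∈ (completeBipartiteGraph (Fin s) (Fin t)).edgeSet, c e < 4) ∧
      RainbowConnected (completeBipartiteGraph (Fin s) (Fin t)) c := by
  have hb : ∀ (i : Fin s) (v : Fin t), col4 i v < 4 := by
    intro i v; unfold col4; split_ifs <;> omega
  refine ⟨bipColor col4, bipColor_lt col4 hb, ?_⟩
  set a0 : Fin s := ⟨0, by omega⟩ with ha0
  set a1 : Fin s := ⟨1, by omega⟩ with ha1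
  set t0 : Fin t := ⟨0, by omega⟩ with ht0
  set t1 : Fin t := ⟨1, by omega⟩ with ht1
  intro x y
  rcases x with i | a <;> rcases y with j | b
  · rcases eq_or_ne i j with rfl | hij
    · exact rainbow0 _
    · have hij' : (i : ℕ) ≠ (j : ℕ) := fun h => hij (Fin.ext h)
      by_cases hbig : 2 ≤ (i : ℕ) ∧ 2 ≤ (j : ℕ)
      · -- length-4 path  inl i - inr t0 - inl a1 - inr t1 - inl j
        refine rainbow4 (b := Sum.inr t0) (d := Sum.inl a1) (e := Sum.inr t1)
          (by simp) (by simp) (by simp) (by simp) ?_ ?_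
        · simp only [List.nodup_cons, List.mem_cons, List.mem_singleton, List.nodup_nil, and_true,
            List.not_mem_nil, or_false]
          refine ⟨?_, ?_, ?_⟩ <;> simp [Fin.ext_iff, ha1, ht0, ht1] <;> omega
        · have e1 : col4 i t0 = 1 := by unfold col4; simp [ht0]; split_ifs <;> omega
          have e2 : col4 a1 t0 = 2 := by unfold col4; simp [ht0, ha1]
          have e3 : col4 a1 t1 = 3 := by unfold col4; simp [ht1, ha1]
          have e4 : col4 j t1 = 0 := by unfold col4; simp [ht1]; split_ifs <;> omega
          simp only [bipColor_lr, bipColor_rl, e1, e2, e3, e4]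
          decide
      · refine rainbow2 (b := Sum.inr t0) (by simp) (by simp) (by simp [hij]) ?_
        simp only [bipColor_lr, bipColor_rl]
        unfold col4
        simp only [ht0]
        split_ifs <;> omega
  · exact rainbow1 (by simp)
  · exact rainbow1 (by simp)
  · rcases eq_or_ne a b with rfl | hab
    · exact rainbow0 _
    · have hab' : (a : ℕ) ≠ (b : ℕ) := fun h => hab (Fin.ext h)
      by_cases hA : (a : ℕ) = 0
      · refine rainbow2 (b := Sum.inl a0) (by simp) (by simp) (by simp [hab]) ?_
        simp only [bipColor_lr, bipColor_rl]
        unfold col4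
        simp only [ha0]
        split_ifs <;> omega
      · by_cases hB : (b : ℕ) = 0
        · refine rainbow2 (b := Sum.inl a0) (by simp) (by simp) (by simp [hab]) ?_
          simp only [bipColor_lr, bipColor_rl]
          unfold col4
          simp only [ha0]
          split_ifs <;> omega
        · -- length-4 path  inr a - inl a0 - inr t0 - inl a1 - inr b
          refine rainbow4 (b := Sum.inl a0) (d := Sum.inr t0) (e := Sum.inl a1)
            (by simp) (by simp) (by simp) (by simp) ?_ ?_
          · simp only [List.nodup_cons, List.mem_cons, List.mem_singleton, List.nodup_nil,
              and_true, List.not_mem_nil, or_false]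
            refine ⟨?_, ?_, ?_⟩ <;> simp [Fin.ext_iff, ha0, ha1, ht0] <;> omega
          · have e1 : col4 a0 a = 1 := by unfold col4; simp [ha0, hA]
            have e2 : col4 a0 t0 = 0 := by unfold col4; simp [ha0, ht0]
            have e3 : col4 a1 t0 = 2 := by unfold col4; simp [ha1, ht0]
            have e4 : col4 a1 b = 3 := by unfold col4; simp [ha1, hB]
            simp only [bipColor_lr, bipColor_rl, e1, e2, e3, e4]
            decide

end Aux

/-- rc(K_{s,t}) = min(⌈t^{1/s}⌉, 4) for 2 ≤ s ≤ t. -/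
theorem rc_completeBipartiteGraph (s t : ℕ) (hs : 2 ≤ s) (hst : s ≤ t) :
    rc (completeBipartiteGraph (Fin s) (Fin t)) = min (ceilRoot s t) 4 := by
  have ht2 : 2 ≤ t := le_trans hs hst
  -- facts about ceilRoot
  have hcr_ne : {n : ℕ | t ≤ n ^ s}.Nonempty :=
    ⟨t, Nat.le_self_pow (by omega) t⟩
  have hcr_mem : t ≤ (ceilRoot s t) ^ s := Nat.sInf_mem hcr_ne
  have hcr2 : 2 ≤ ceilRoot s t := by
    by_contra hcon
    push_neg at hcon
    have h1 : (ceilRoot s t) ^ s ≤ 1 ^ s := Nat.pow_le_pow_left (by omega) s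
    simp at h1
    omega
  -- the defining set of rc
  set S : Set ℕ := {n | ∃ c : Sym2 (Fin s ⊕ Fin t) → ℕ,
    (∀ e ∈ (completeBipartiteGraph (Fin s) (Fin t)).edgeSet, c e < n) ∧
    RainbowConnected (completeBipartiteGraph (Fin s) (Fin t)) c} with hS
  have h4mem : (4 : ℕ) ∈ S := by
    obtain ⟨c, hc, hrc⟩ := upper_4 hs ht2
    exact ⟨c, hc, hrc⟩
  have hSne : S.Nonempty := ⟨4, h4mem⟩
  have hrc_def : rc (completeBipartiteGraph (Fin s) (Fin t)) = sInf S := rfl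
  rw [hrc_def]
  apply le_antisymm
  · -- sInf S ≤ min
    rcases le_or_gt (ceilRoot s t) 4 with hle | hgt
    · rw [min_eq_left hle]
      apply Nat.sInf_le
      obtain ⟨c, hc, hrc⟩ := upper_n hs hst hcr2 hcr_mem
      exact ⟨c, hc, hrc⟩
    · rw [min_eq_right (by omega)]
      exact Nat.sInf_le h4mem
  · -- min ≤ sInf S
    apply le_csInf hSne
    intro n hn
    obtain ⟨c, hc, hrcn⟩ := hn
    rcases le_or_gt n 3 with hn3 | hn4
    · have htn : t ≤ n ^ s := lower_bound hs hst hn3 c hc hrcn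
      have : ceilRoot s t ≤ n := Nat.sInf_le htn
      exact le_trans (min_le_left _ _) this
    · exact le_trans (min_le_right _ _) (by omega)
end

section
/- Let G = K_{n1,...,nk} be a complete k-partite graph with k ≥ 3 and n1 ≤ ... ≤ nk, and set s = n1 + ... + n_{k-1}, t = nk. If nk ≥ 2 and s > t, then rc(G) = 2. -/
open SimpleGraph

/-! Two vertices of the largest part `K` (of size `t`) are not adjacent, and a rainbow path
between them has two edges of different colours, so at least two colours are needed.

Conversely, label the vertices of `K` by `0, …, t - 1`, and list the other `s ≥ t` vertices part
by part, labelling them cyclically modulo `t`. Every part has at most `t` vertices, so labels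
within a part are distinct, and both `K` and its complement carry every label. Colour an edge `uv`
with `u ∈ K`, `v ∉ K` by whether `label u ≤ label v`. For two vertices `a, b` of one part with
`label a < label b`, a vertex on the other side of `K` labelled `label a` (if the part is `K`)
or `label b` (otherwise) is joined to `a` and `b` by edges of different colours. -/

section RainbowPaths

variable {V : Type*} {G : SimpleGraph V} {c : Sym2 V → ℕ}

theorem exists_rainbow_path_of_adj_of_adj {u w v : V} (huw : G.Adj u w) (hwv : G.Adj w v)
    (huv : u ≠ v) (hc : c s(u, w) ≠ c s(w, v)) :
    ∃ p : G.Walk u v, p.IsPath ∧ (p.edges.map c).Nodup :=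
  ⟨.cons huw (.cons hwv .nil), by simp [Walk.isPath_def, huw.ne, hwv.ne, huv], by simp [hc]⟩

theorem RainbowConnected.two_le_of_not_adj (hrc : RainbowConnected G c) {m : ℕ}
    (hc : ∀ e ∈ G.edgeSet, c e < m) {u v : V} (huv : u ≠ v) (hnadj : ¬ G.Adj u v) :
    2 ≤ m := by
  obtain ⟨p, -, hnodup⟩ := hrc u v
  cases p with
  | nil => exact absurd rfl huv
  | @cons _ w _ huw q =>
    cases q with
    | nil => exact absurd huw hnadj
    | @cons _ x _ hwx r =>
      have hne : c s(u, w) ≠ c s(w, x) := by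
        simp only [Walk.edges_cons, List.map_cons, List.nodup_cons, List.mem_cons] at hnodup
        exact fun h => hnodup.1 (.inl h)
      have h₁ := hc s(u, w) huw
      have h₂ := hc s(w, x) hwx
      omega

theorem rc_eq_two_of_rainbowConnected [Fintype V] (hc : ∀ e ∈ G.edgeSet, c e < 2)
    (hrc : RainbowConnected G c) {u v : V} (huv : u ≠ v) (hnadj : ¬ G.Adj u v) : rc G = 2 :=
  le_antisymm (Nat.sInf_le ⟨c, hc, hrc⟩) <| le_csInf ⟨2, c, hc, hrc⟩ <| by
    rintro m ⟨c', hc', hrc'⟩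
    exact hrc'.two_le_of_not_adj hc' huv hnadj

end RainbowPaths

section CrossColoring

variable {ι : Type*} {V : ι → Type*} {α : Type*} [LinearOrder α]

open Classical in
noncomputable def crossColoring (K : ι) (f : (Σ i, V i) → α) (e : Sym2 (Σ i, V i)) : ℕ :=
  if ∃ u ∈ e, ∃ v ∈ e, u.1 = K ∧ v.1 ≠ K ∧ f u ≤ f v then 1 else 0

variable {K : ι} {f : (Σ i, V i) → α}

theorem crossColoring_lt_two (e : Sym2 (Σ i, V i)) : crossColoring K f e < 2 := by
  unfold crossColoring
  split_ifs <;> omega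

theorem crossColoring_mk {u v : Σ i, V i} (hu : u.1 = K) (hv : v.1 ≠ K) :
    crossColoring K f s(u, v) = if f u ≤ f v then 1 else 0 := by
  simp [crossColoring, hu, hv]

theorem exists_crossColoring_mk_ne (hlabel : f '' {u | u.1 = K} = f '' {u | u.1 ≠ K})
    {i : ι} {a b : V i} (hab : f ⟨i, a⟩ < f ⟨i, b⟩) :
    ∃ w : Σ i, V i, w.1 ≠ i ∧
      crossColoring K f s(⟨i, a⟩, w) ≠ crossColoring K f s(w, ⟨i, b⟩) := by
  by_cases hi : i = K
  · obtain ⟨w, hw, hfw⟩ : f ⟨i, a⟩ ∈ f '' {u | u.1 ≠ K} := hlabel ▸ ⟨⟨i, a⟩, hi, rfl⟩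
    refine ⟨w, hi ▸ hw, ?_⟩
    rw [Sym2.eq_swap (a := w), crossColoring_mk hi hw, crossColoring_mk hi hw, hfw]
    simp [hab.not_ge]
  · obtain ⟨x, hx, hfx⟩ : f ⟨i, b⟩ ∈ f '' {u | u.1 = K} := hlabel ▸ ⟨⟨i, b⟩, hi, rfl⟩
    refine ⟨x, fun h => hi (h ▸ hx), ?_⟩
    rw [Sym2.eq_swap, crossColoring_mk hx hi, crossColoring_mk hx hi, hfx]
    simp [hab.not_ge]

theorem rainbowConnected_crossColoring (hinj : ∀ i, Function.Injective fun a : V i => f ⟨i, a⟩)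
    (hlabel : f '' {u | u.1 = K} = f '' {u | u.1 ≠ K}) :
    RainbowConnected (completeMultipartiteGraph V) (crossColoring K f) := by
  rintro ⟨i, a⟩ ⟨j, b⟩
  by_cases hij : i = j
  · subst hij
    rcases eq_or_ne a b with rfl | hab
    · exact ⟨.nil, .nil, by simp⟩
    obtain ⟨w, hw, hc⟩ : ∃ w : Σ i, V i, w.1 ≠ i ∧
        crossColoring K f s(⟨i, a⟩, w) ≠ crossColoring K f s(w, ⟨i, b⟩) := by
      rcases ((hinj i).ne hab).lt_or_gt with h | h
      · exact exists_crossColoring_mk_ne hlabel h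
      · obtain ⟨w, hw, hc⟩ := exists_crossColoring_mk_ne hlabel h
        exact ⟨w, hw, by rwa [Sym2.eq_swap, ne_comm, Sym2.eq_swap (a := w)]⟩
    exact exists_rainbow_path_of_adj_of_adj (Ne.symm hw) hw (by simpa using hab) hc
  · have hadj : (completeMultipartiteGraph V).Adj ⟨i, a⟩ ⟨j, b⟩ := hij
    exact ⟨hadj.toWalk, by simpa using hadj.ne, by simp⟩

end CrossColoring

section CyclicLabel

variable {m : ℕ} {n : Fin (m + 1) → ℕ}

def cyclicLabel (n : Fin (m + 1) → ℕ) (u : Σ i, Fin (n i)) : ℕ :=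
  if u.1 = Fin.last m then u.2 else finSigmaFinEquiv u % n (Fin.last m)

theorem cyclicLabel_injective (hle : ∀ i, n i ≤ n (Fin.last m)) (i : Fin (m + 1)) :
    Function.Injective fun a : Fin (n i) => cyclicLabel n ⟨i, a⟩ := by
  intro a b hab
  by_cases hi : i = Fin.last m
  · subst hi
    simpa [cyclicLabel, Fin.val_inj] using hab
  · simp only [cyclicLabel, hi, if_false, finSigmaFinEquiv_apply] at hab
    exact Fin.ext <| (Nat.ModEq.add_left_cancel' _ hab).eq_of_lt_of_lt
      (a.2.trans_le (hle i)) (b.2.trans_le (hle i))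

theorem image_cyclicLabel_last (hle : ∀ i, n i ≤ n (Fin.last m))
    (hs : n (Fin.last m) ≤ ∑ i : Fin m, n i.castSucc) :
    cyclicLabel n '' {u | u.1 = Fin.last m} = cyclicLabel n '' {u | u.1 ≠ Fin.last m} := by
  apply subset_antisymm
  · rintro _ ⟨⟨k, a⟩, rfl : k = Fin.last m, rfl⟩
    have ha : (a : ℕ) < ∑ i, n i := by
      rw [Fin.sum_univ_castSucc]
      omega
    rcases hw : finSigmaFinEquiv.symm ⟨a, ha⟩ with ⟨i, b⟩
    have hpos : (finSigmaFinEquiv ⟨i, b⟩ : ℕ) = a := by simp [← hw]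
    have hi : i ≠ Fin.last m := by
      rintro rfl
      have hoffset : ∑ j : Fin (Fin.last m : ℕ), n (Fin.castLE (Fin.last m).2.le j) =
          ∑ j : Fin m, n j.castSucc := rfl
      rw [finSigmaFinEquiv_apply, hoffset] at hpos
      omega
    exact ⟨⟨i, b⟩, hi, by simp [cyclicLabel, hi, hpos, Nat.mod_eq_of_lt a.2]⟩
  · rintro _ ⟨v, hv : v.1 ≠ Fin.last m, rfl⟩
    have ht : 0 < n (Fin.last m) := v.2.pos.trans_le (hle v.1)
    exact ⟨⟨Fin.last m, ⟨finSigmaFinEquiv v % n (Fin.last m), Nat.mod_lt _ ht⟩⟩, rfl,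
      by simp [cyclicLabel, hv]⟩

end CyclicLabel

/-- complete k-partite graph, k ≥ 3, nk ≥ 2 and s > t implies rc = 2. -/
theorem rc_completeMultipartiteGraph_eq_two (k : ℕ) (hk : 3 ≤ k) (n : Fin k → ℕ)
    (hmono : Monotone n)
    (ht : 2 ≤ n ⟨k - 1, by omega⟩)
    (hst : n ⟨k - 1, by omega⟩ < ∑ i ∈ Finset.univ.erase (⟨k - 1, by omega⟩ : Fin k), n i) :
    rc (completeMultipartiteGraph (fun i => Fin (n i))) = 2 := by
  obtain ⟨m, rfl⟩ : ∃ m, k = m + 1 := ⟨k - 1, by omega⟩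
  change 2 ≤ n (Fin.last m) at ht
  change n (Fin.last m) < ∑ i ∈ Finset.univ.erase (Fin.last m), n i at hst
  have hle : ∀ i, n i ≤ n (Fin.last m) := fun i => hmono (Fin.le_last i)
  have hs : n (Fin.last m) ≤ ∑ i : Fin m, n i.castSucc := by
    have := Finset.sum_erase_add _ n (Finset.mem_univ (Fin.last m))
    rw [Fin.sum_univ_castSucc] at this
    omega
  have hrc := rainbowConnected_crossColoring (cyclicLabel_injective hle)
    (image_cyclicLabel_last hle hs)
  refine rc_eq_two_of_rainbowConnected (fun e _ => crossColoring_lt_two e) hrc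
    (u := ⟨Fin.last m, ⟨0, by omega⟩⟩) (v := ⟨Fin.last m, ⟨1, by omega⟩⟩) (by simp) ?_
  simp
end

section
/- If D is a connected two-way dominating set in a connected graph G, then rc(G) ≤ rc(G[D]) + 3. -/
open SimpleGraph

/-! Let `k = rc(G[D])` and fix a rainbow colouring of `G[D]` with colours `< k`. Every vertex `v`
outside `D` gets an anchor `f v ∈ D` adjacent to it and a label `sel v ∈ {0, 1}` such that, if `v`
has a neighbour outside `D`, it has one with the other label (the parity of the
distance to a root of its component in `G - D`). Colour `v (f v)` with `k + sel v`, the other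
edges from `v` into `D` with `k + 1 - sel v`, and the edges outside `D` with `k + 2`.
Outside vertices `u`, `v` with different labels are joined through their anchors. If the labels
agree, `v` is entered instead along a second edge `v b`, which exists because `v` is not pendant:
directly if `b ∈ D`, and otherwise through `f w, w, v` for a neighbour `w ∉ D` of the other label,
with colours `k + 1 - sel v, k + 2`. -/

namespace SimpleGraph

variable {V : Type*} {G : SimpleGraph V}

lemma Reachable.exists_adj_dist_mod_two_ne {v r : V} (hr : G.Reachable v r)
    (hv : ∃ w, G.Adj v w) :
    ∃ w, G.Adj v w ∧ G.dist w r % 2 ≠ G.dist v r % 2 := by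
  by_cases hvr : v = r
  · obtain ⟨w, hw⟩ := hv
    subst hvr
    exact ⟨w, hw, by rw [dist_self, dist_comm, dist_eq_one_iff_adj.mpr hw]; decide⟩
  obtain ⟨p, hp⟩ := hr.exists_walk_length_eq_dist
  cases p with
  | nil => exact absurd rfl hvr
  | @cons _ w _ hvw q =>
    have hq : q.length = G.dist w r := length_eq_dist_of_subwalk hp (Walk.isSubwalk_cons q hvw)
    refine ⟨w, hvw, ?_⟩
    rw [← hp, ← hq, Walk.length_cons]
    omega

lemma exists_bool_labelling_adj_ne (G : SimpleGraph V) :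
    ∃ sel : V → Bool, ∀ v, (∃ w, G.Adj v w) → ∃ w, G.Adj v w ∧ sel w ≠ sel v := by
  let root : V → V := fun v => (G.connectedComponentMk v).out
  have hroot (v : V) : G.Reachable v (root v) :=
    (ConnectedComponent.eq.mp (Quot.out_eq (G.connectedComponentMk v))).symm
  refine ⟨fun v => decide (G.dist v (root v) % 2 = 1), fun v hv => ?_⟩
  obtain ⟨w, hvw, hparity⟩ := (hroot v).exists_adj_dist_mod_two_ne hv
  have hrw : root w = root v := by
    simp only [root, ConnectedComponent.connectedComponentMk_eq_of_adj hvw.symm]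
  refine ⟨w, hvw, ?_⟩
  simp only [hrw, ne_eq, decide_eq_decide]
  omega

lemma exists_bool_labelling_adj_ne_on (G : SimpleGraph V) (S : Set V) :
    ∃ sel : V → Bool, ∀ v ∈ S, (∃ w ∈ S, G.Adj v w) → ∃ w ∈ S, G.Adj v w ∧ sel w ≠ sel v := by
  obtain ⟨sel, hsel⟩ := exists_bool_labelling_adj_ne (G.induce S)
  refine ⟨Function.extend Subtype.val sel fun _ => false, fun v hv ⟨w, hw, hvw⟩ => ?_⟩
  obtain ⟨⟨x, hx⟩, hvx, hne⟩ := hsel ⟨v, hv⟩ ⟨⟨w, hw⟩, hvw⟩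
  refine ⟨x, hx, hvx, ?_⟩
  rwa [← Subtype.val_injective.extend_apply sel (fun _ => false) ⟨x, hx⟩,
    ← Subtype.val_injective.extend_apply sel (fun _ => false) ⟨v, hv⟩] at hne

lemma exists_adj_ne_of_degree_ne_one {v w : V} [Fintype (G.neighborSet v)]
    (hdeg : G.degree v ≠ 1) (hvw : G.Adj v w) : ∃ b, G.Adj v b ∧ b ≠ w := by
  have hpos : 0 < G.degree v := G.degree_pos_iff_exists_adj v |>.mpr ⟨w, hvw⟩
  obtain ⟨b, hb, hbw⟩ := Finset.exists_mem_ne (s := G.neighborFinset v)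
    (by rw [card_neighborFinset_eq_degree]; omega) w
  exact ⟨b, (mem_neighborFinset G v b).mp hb, hbw⟩

lemma RainbowConnected.of_walks {c : Sym2 V → ℕ}
    (h : ∀ u v, ∃ p : G.Walk u v, (p.edges.map c).Nodup) : RainbowConnected G c := by
  classical
  intro u v
  obtain ⟨p, hp⟩ := h u v
  exact ⟨p.bypass, p.bypass_isPath, hp.sublist (p.edges_bypass_sublist_edges.map c)⟩

lemma Connected.exists_rainbowConnected_lt_rc_s9 [Fintype V] (hG : G.Connected) :
    ∃ c : Sym2 V → ℕ, (∀ e ∈ G.edgeSet, c e < rc G) ∧ RainbowConnected G c := by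
  classical
  let c : Sym2 V → ℕ := fun e => Fintype.equivFin (Sym2 V) e
  have hc : c.Injective := Fin.val_injective.comp (Fintype.equivFin _).injective
  have hc_rainbow : RainbowConnected G c := RainbowConnected.of_walks fun u v => by
    obtain ⟨p, hp, -⟩ := (hG.preconnected u v).exists_path_of_dist
    exact ⟨p, hp.edges_nodup.map hc⟩
  exact Nat.sInf_mem
    (s := {n | ∃ c : Sym2 V → ℕ, (∀ e ∈ G.edgeSet, c e < n) ∧ RainbowConnected G c})
    ⟨Fintype.card (Sym2 V), c, fun e _ => (Fintype.equivFin _ e).isLt, hc_rainbow⟩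

lemma _root_.List.Nodup.reverse_append_append {α : Type*} {l₁ l₂ m : List α}
    (hl : (l₁ ++ l₂).Nodup) (hm : m.Nodup) (hdisj : ∀ x ∈ m, x ∉ l₁ ++ l₂) :
    (l₁.reverse ++ (m ++ l₂)).Nodup := by
  have hperm : (l₁.reverse ++ (m ++ l₂)).Perm (m ++ (l₁ ++ l₂)) :=
    (List.reverse_perm l₁).append_right _ |>.trans (List.perm_append_comm_assoc _ _ _)
  rw [hperm.nodup_iff, List.nodup_append]
  exact ⟨hm, hl, fun x hx y hy hxy => hdisj x hx (hxy ▸ hy)⟩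

lemma rainbowConnected_of_tails {c : Sym2 V → ℕ} {D : Set V} {k : ℕ}
    (hD : ∀ a ∈ D, ∀ b ∈ D, ∃ p : G.Walk a b, (p.edges.map c).Nodup ∧ ∀ n ∈ p.edges.map c, n < k)
    (htails : ∀ u v, ∃ a ∈ D, ∃ b ∈ D, ∃ (p : G.Walk a u) (q : G.Walk b v),
      (p.edges.map c ++ q.edges.map c).Nodup ∧ ∀ n ∈ p.edges.map c ++ q.edges.map c, k ≤ n) :
    RainbowConnected G c := by
  refine RainbowConnected.of_walks fun u v => ?_
  obtain ⟨a, ha, b, hb, p, q, hpq, hk⟩ := htails u v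
  obtain ⟨r, hr, hrk⟩ := hD a ha b hb
  refine ⟨p.reverse.append (r.append q), ?_⟩
  simp only [Walk.edges_append, Walk.edges_reverse, List.map_append, List.map_reverse]
  exact hpq.reverse_append_append hr fun n hn hn' => (hk n hn').not_gt (hrk n hn)

lemma RainbowConnected.exists_walk_of_induce {D : Set V} {c₀ : Sym2 D → ℕ} {c : Sym2 V → ℕ}
    {k : ℕ} (hrc : RainbowConnected (G.induce D) c₀) (hlt : ∀ e ∈ (G.induce D).edgeSet, c₀ e < k)
    (hc : ∀ e, c (e.map Subtype.val) = c₀ e) :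
    ∀ a ∈ D, ∀ b ∈ D, ∃ p : G.Walk a b, (p.edges.map c).Nodup ∧ ∀ n ∈ p.edges.map c, n < k := by
  intro a ha b hb
  obtain ⟨q, -, hq⟩ := hrc ⟨a, ha⟩ ⟨b, hb⟩
  let p : G.Walk a b := q.map (Embedding.induce D).toHom
  have hedges : p.edges = q.edges.map (Sym2.map Subtype.val) := Walk.edges_map _ _
  have hcolors : p.edges.map c = q.edges.map c₀ := by
    rw [hedges, List.map_map]
    exact List.map_congr_left fun e _ => hc e
  refine ⟨p, hcolors ▸ hq, ?_⟩
  rw [hcolors]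
  intro n hn
  obtain ⟨e, he, rfl⟩ := List.mem_map.mp hn
  exact hlt e (q.edges_subset_edgeSet he)

open Classical in
noncomputable def boundaryColor (k : ℕ) (f : V → V) (sel : V → Bool) (v d : V) : ℕ :=
  if d = f v then k + (sel v).toNat else k + (!sel v).toNat

lemma boundaryColor_le_succ (k : ℕ) (f : V → V) (sel : V → Bool) (v d : V) :
    boundaryColor k f sel v d ≤ k + 1 := by
  unfold boundaryColor
  split_ifs <;> simp [Bool.toNat_le]

open Classical in
noncomputable def dominatingColoring (D : Set V) (c₀ : Sym2 D → ℕ) (k : ℕ) (f : V → V)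
    (sel : V → Bool) : Sym2 V → ℕ :=
  Sym2.lift ⟨fun u v =>
    if hu : u ∈ D then
      if hv : v ∈ D then c₀ s(⟨u, hu⟩, ⟨v, hv⟩) else boundaryColor k f sel v u
    else if v ∈ D then boundaryColor k f sel u v else k + 2,
    fun u v => by by_cases hu : u ∈ D <;> by_cases hv : v ∈ D <;> simp [hu, hv, Sym2.eq_swap]⟩

section dominatingColoring

variable {D : Set V} {c₀ : Sym2 D → ℕ} {k : ℕ} {f : V → V} {sel : V → Bool}

lemma dominatingColoring_map_val (e : Sym2 D) :
    dominatingColoring D c₀ k f sel (e.map Subtype.val) = c₀ e := by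
  induction e using Sym2.ind with
  | h a b => simp [dominatingColoring]

lemma dominatingColoring_anchor {v : V} (hv : v ∉ D) (hfv : f v ∈ D) :
    dominatingColoring D c₀ k f sel s(f v, v) = k + (sel v).toNat := by
  simp [dominatingColoring, boundaryColor, hv, hfv]

lemma dominatingColoring_of_ne_anchor {d v : V} (hd : d ∈ D) (hv : v ∉ D) (hdf : d ≠ f v) :
    dominatingColoring D c₀ k f sel s(d, v) = k + (!sel v).toNat := by
  simp [dominatingColoring, boundaryColor, hd, hv, hdf]

lemma dominatingColoring_of_not_mem {u v : V} (hu : u ∉ D) (hv : v ∉ D) :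
    dominatingColoring D c₀ k f sel s(u, v) = k + 2 := by
  simp [dominatingColoring, hu, hv]

lemma dominatingColoring_lt (hc₀ : ∀ e ∈ (G.induce D).edgeSet, c₀ e < k) :
    ∀ e ∈ G.edgeSet, dominatingColoring D c₀ k f sel e < k + 3 := by
  intro e he
  induction e using Sym2.ind with
  | h u v =>
    by_cases hu : u ∈ D <;> by_cases hv : v ∈ D
    · have := hc₀ s(⟨u, hu⟩, ⟨v, hv⟩) he
      simp only [dominatingColoring, Sym2.lift_mk, hu, hv, dite_true]
      omega
    · have := boundaryColor_le_succ k f sel v u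
      simp only [dominatingColoring, Sym2.lift_mk, hu, hv, dite_true, dite_false]
      omega
    · have := boundaryColor_le_succ k f sel u v
      simp only [dominatingColoring, Sym2.lift_mk, hu, hv, dite_false, ite_true]
      omega
    · simp only [dominatingColoring, Sym2.lift_mk, hu, hv, dite_false, ite_false]
      omega

lemma exists_walk_avoiding_anchor_color (hf : ∀ w ∉ D, f w ∈ D ∧ G.Adj (f w) w)
    (hsel : ∀ v ∉ D, (∃ w ∉ D, G.Adj v w) → ∃ w ∉ D, G.Adj v w ∧ sel w ≠ sel v)
    {v b : V} (hv : v ∉ D) (hvb : G.Adj v b) (hbf : b ≠ f v) :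
    ∃ a ∈ D, ∃ p : G.Walk a v,
      p.edges.map (dominatingColoring D c₀ k f sel) = [k + (!sel v).toNat] ∨
      p.edges.map (dominatingColoring D c₀ k f sel) = [k + (!sel v).toNat, k + 2] := by
  by_cases hb : b ∈ D
  · exact ⟨b, hb, hvb.symm.toWalk, Or.inl (by simp [dominatingColoring_of_ne_anchor hb hv hbf])⟩
  obtain ⟨w, hw, hvw, hsw⟩ := hsel v hv ⟨b, hb, hvb⟩
  obtain ⟨hfw, hfww⟩ := hf w hw
  have hsw' : sel w = !sel v := Bool.eq_not_iff.mpr hsw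
  refine ⟨f w, hfw, .cons hfww hvw.symm.toWalk, Or.inr ?_⟩
  simp [dominatingColoring_anchor hw hfw, dominatingColoring_of_not_mem hw hv, hsw']

lemma rainbowConnected_dominatingColoring (hrc : RainbowConnected (G.induce D) c₀)
    (hlt : ∀ e ∈ (G.induce D).edgeSet, c₀ e < k) (hf : ∀ w ∉ D, f w ∈ D ∧ G.Adj (f w) w)
    (hsel : ∀ v ∉ D, (∃ w ∉ D, G.Adj v w) → ∃ w ∉ D, G.Adj v w ∧ sel w ≠ sel v)
    (hdeg : ∀ v ∉ D, ∃ b, G.Adj v b ∧ b ≠ f v) :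
    RainbowConnected G (dominatingColoring D c₀ k f sel) := by
  refine rainbowConnected_of_tails (hrc.exists_walk_of_induce hlt dominatingColoring_map_val)
    fun u v => ?_
  by_cases hu : u ∈ D
  · by_cases hv : v ∈ D
    · exact ⟨u, hu, v, hv, .nil, .nil, by simp⟩
    · exact ⟨u, hu, f v, (hf v hv).1, .nil, (hf v hv).2.toWalk,
        by simp [dominatingColoring_anchor hv (hf v hv).1]⟩
  by_cases hv : v ∈ D
  · exact ⟨f u, (hf u hu).1, v, hv, (hf u hu).2.toWalk, .nil,
      by simp [dominatingColoring_anchor hu (hf u hu).1]⟩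
  have hpu := dominatingColoring_anchor (c₀ := c₀) (k := k) (sel := sel) hu (hf u hu).1
  by_cases hsuv : sel u = sel v
  · obtain ⟨b, hvb, hbf⟩ := hdeg v hv
    obtain ⟨a, ha, q, hq⟩ := exists_walk_avoiding_anchor_color hf hsel hv hvb hbf
    refine ⟨f u, (hf u hu).1, a, ha, (hf u hu).2.toWalk, q, ?_⟩
    rcases hq with hq | hq <;> rw [hq] <;> cases hs : sel v <;> simp [hpu, hsuv, hs]
  · refine ⟨f u, (hf u hu).1, f v, (hf v hv).1, (hf u hu).2.toWalk, (hf v hv).2.toWalk, ?_⟩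
    have hpv := dominatingColoring_anchor (c₀ := c₀) (k := k) (sel := sel) hv (hf v hv).1
    cases hs : sel u <;> cases hs' : sel v <;> simp_all

end dominatingColoring

end SimpleGraph

theorem rc_le_rc_induce_twoWayDominating_general {V : Type*} [Fintype V]
    (G : SimpleGraph V) [DecidableRel G.Adj] (D : Finset V)
    (hdom : ∀ v ∉ D, ∃ u ∈ D, G.Adj u v)
    (hpendant : ∀ v : V, G.degree v = 1 → v ∈ D)
    (hDconn : (G.induce (D : Set V)).Connected) :
    rc G ≤ rc (G.induce (D : Set V)) + 3 := by
  obtain ⟨c₀, hc₀lt, hc₀⟩ := hDconn.exists_rainbowConnected_lt_rc_s9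
  choose! f hf using hdom
  obtain ⟨sel, hsel⟩ := G.exists_bool_labelling_adj_ne_on (D : Set V)ᶜ
  have hdeg : ∀ v ∉ D, ∃ b, G.Adj v b ∧ b ≠ f v := fun v hv =>
    exists_adj_ne_of_degree_ne_one (fun h => hv (hpendant v h)) (hf v hv).2.symm
  refine Nat.sInf_le ⟨dominatingColoring D c₀ _ f sel, dominatingColoring_lt hc₀lt, ?_⟩
  exact rainbowConnected_dominatingColoring hc₀ hc₀lt hf hsel hdeg

/-- connected two-way dominating set D gives rc(G) ≤ rc(G[D]) + 3. -/
theorem rc_le_rc_induce_twoWayDominating {V : Type*} [Fintype V] [DecidableEq V]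
    (G : SimpleGraph V) [DecidableRel G.Adj] (hG : G.Connected) (D : Finset V)
    (hdom : ∀ v ∉ D, ∃ u ∈ D, G.Adj u v)
    (hpendant : ∀ v : V, G.degree v = 1 → v ∈ D)
    (hDconn : (G.induce (D : Set V)).Connected) :
    rc G ≤ rc (G.induce (D : Set V)) + 3 :=
  rc_le_rc_induce_twoWayDominating_general G D hdom hpendant hDconn
end

section
/- Let G be a connected graph with diameter at least 4. Then its complement graph is connected and rc(complement of G) ≤ 4. -/
open SimpleGraph

private lemma rainbow_aux {V : Type*} (G : SimpleGraph V) (hG : G.Connected)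
    (u v : V) (huv : 4 ≤ G.dist u v) :
    ∃ c : Sym2 V → ℕ, (∀ e, c e < 4) ∧ RainbowConnected Gᶜ c := by
  classical
  have hvne : u ≠ v := by
    rintro rfl; simp [SimpleGraph.dist_self] at huv
  obtain ⟨p, hp⟩ := hG.exists_walk_length_eq_dist u v
  obtain ⟨q, hq⟩ := hG.exists_walk_length_eq_dist v u
  have hplen : 0 < p.length := by rw [hp]; omega
  have hqlen : 0 < q.length := by rw [hq, SimpleGraph.dist_comm]; omega
  have hub : G.Adj u (p.getVert 1) := by
    have h := p.adj_getVert_succ (i := 0) hplen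
    simpa using h
  have hvb' : G.Adj v (q.getVert 1) := by
    have h := q.adj_getVert_succ (i := 0) hqlen
    simpa using h
  set b := p.getVert 1 with hbdef
  set b' := q.getVert 1 with hb'def
  have hdub : G.dist u b = 1 := SimpleGraph.dist_eq_one_iff_adj.mpr hub
  have hdvb' : G.dist v b' = 1 := SimpleGraph.dist_eq_one_iff_adj.mpr hvb'
  have tri : ∀ x y z : V, G.dist x z ≤ G.dist x y + G.dist y z :=
    fun x y z => hG.dist_triangle
  have hdbv : 3 ≤ G.dist b v := by have := tri u b v; omega
  have hdub' : 3 ≤ G.dist u b' := by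
    have h1 := tri u b' v
    have h2 : G.dist b' v = 1 := by rw [SimpleGraph.dist_comm]; exact hdvb'
    omega
  have hbu : b ≠ u := hub.ne'
  have hbv : b ≠ v := by intro h; rw [h] at hdub; omega
  have hb'v : b' ≠ v := hvb'.ne'
  have hb'u : b' ≠ u := by
    intro h; rw [h] at hdub'; simp [SimpleGraph.dist_self] at hdub'
  have ca : ∀ {x y : V}, 2 ≤ G.dist x y → Gᶜ.Adj x y := by
    intro x y h
    have hne : x ≠ y := by rintro rfl; simp [SimpleGraph.dist_self] at h
    refine ⟨hne, fun hadj => ?_⟩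
    have := SimpleGraph.dist_eq_one_iff_adj.mpr hadj
    omega
  set c : Sym2 V → ℕ := fun e =>
    if e = s(u, v) then 3
    else if u ∈ e then 0
    else if v ∈ e then 2
    else if b ∈ e ∨ b' ∈ e then 1
    else 0
    with hcdef
  have cuv : c s(u, v) = 3 := by simp [hcdef]
  have cvu : c s(v, u) = 3 := by rw [Sym2.eq_swap]; exact cuv
  have cu : ∀ w, w ≠ v → c s(u, w) = 0 := by
    intro w hw
    simp [hcdef, Sym2.eq_iff, hw, hvne]
  have cu2 : ∀ w, w ≠ v → c s(w, u) = 0 := by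
    intro w hw; rw [Sym2.eq_swap]; exact cu w hw
  have cv : ∀ w, w ≠ u → c s(v, w) = 2 := by
    intro w hw
    simp [hcdef, Sym2.eq_iff, hw, Ne.symm hw, hvne, Ne.symm hvne]
  have cv2 : ∀ w, w ≠ u → c s(w, v) = 2 := by
    intro w hw; rw [Sym2.eq_swap]; exact cv w hw
  have cb : ∀ w, w ≠ u → w ≠ v → c s(b, w) = 1 := by
    intro w hw1 hw2
    simp [hcdef, Sym2.eq_iff, hw1, hw2, Ne.symm hw1, Ne.symm hw2,
      hbu, hbv, Ne.symm hbu, Ne.symm hbv, hvne, Ne.symm hvne]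
  have cb' : ∀ w, w ≠ u → w ≠ v → c s(b', w) = 1 := by
    intro w hw1 hw2
    simp [hcdef, Sym2.eq_iff, hw1, hw2, Ne.symm hw1, Ne.symm hw2,
      hb'u, hb'v, Ne.symm hb'u, Ne.symm hb'v, hvne, Ne.symm hvne]
  refine ⟨c, ?_, ?_⟩
  · intro e
    simp only [hcdef]
    split_ifs <;> omega
  -- rainbow connectivity
  have hu_case : ∀ y, y ≠ u → ∃ p : Gᶜ.Walk u y, p.IsPath ∧ (p.edges.map c).Nodup := by
    intro y hyu
    by_cases h2 : 2 ≤ G.dist u y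
    · exact ⟨.cons (ca h2) .nil, by simp [Walk.isPath_def, (ca h2).ne], by simp⟩
    · have hyv : y ≠ v := by rintro rfl; omega
      have hvy : 2 ≤ G.dist v y := by
        have := tri u y v
        have := SimpleGraph.dist_comm (G := G) (u := y) (v := v)
        omega
      refine ⟨.cons (ca (by omega : 2 ≤ G.dist u v)) (.cons (ca hvy) .nil), ?_, ?_⟩
      · simp [Walk.isPath_def, hvne, hyu, hyv, Ne.symm hyu, Ne.symm hyv]
      · simp [cuv, cv y hyu]
  have hv_case : ∀ y, y ≠ v → y ≠ u → ∃ p : Gᶜ.Walk v y, p.IsPath ∧ (p.edges.map c).Nodup := by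
    intro y hyv hyu
    by_cases h2 : G.dist u y ≤ 2
    · have hvy : 2 ≤ G.dist v y := by
        have := tri u y v
        have := SimpleGraph.dist_comm (G := G) (u := y) (v := v)
        omega
      exact ⟨.cons (ca hvy) .nil, by simp [Walk.isPath_def, (ca hvy).ne], by simp⟩
    · have hvu : 2 ≤ G.dist v u := by
        have := SimpleGraph.dist_comm (G := G) (u := u) (v := v); omega
      refine ⟨.cons (ca hvu) (.cons (ca (by omega : 2 ≤ G.dist u y)) .nil), ?_, ?_⟩
      · simp [Walk.isPath_def, Ne.symm hvne, hyv, hyu, Ne.symm hyv, Ne.symm hyu]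
      · simp [cvu, cu y hyv]
  intro x y
  by_cases hxy : x = y
  · subst hxy; exact ⟨.nil, by simp, by simp⟩
  by_cases hxu : x = u
  · subst hxu; exact hu_case y (Ne.symm hxy)
  by_cases hyu : y = u
  · subst hyu
    obtain ⟨p, hp, hn⟩ := hu_case x hxu
    exact ⟨p.reverse, hp.reverse, by simpa using hn⟩
  by_cases hxv : x = v
  · subst hxv; exact hv_case y (Ne.symm hxy) hyu
  by_cases hyv : y = v
  · subst hyv
    obtain ⟨p, hp, hn⟩ := hv_case x hxv hxu
    exact ⟨p.reverse, hp.reverse, by simpa using hn⟩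
  -- now x, y ∉ {u, v}
  have hxupos : 0 < G.dist u x := hG.pos_dist_of_ne (Ne.symm hxu)
  have hyupos : 0 < G.dist u y := hG.pos_dist_of_ne (Ne.symm hyu)
  by_cases h1 : 2 ≤ G.dist u x
  · have haxu : Gᶜ.Adj x u := by
      refine ca ?_
      have := SimpleGraph.dist_comm (G := G) (u := u) (v := x); omega
    have hauv : Gᶜ.Adj u v := ca (by omega)
    by_cases h2 : G.dist u y ≤ 2
    · -- x - u - v - y
      have havy : Gᶜ.Adj v y := by
        refine ca ?_
        have := tri u y v
        have := SimpleGraph.dist_comm (G := G) (u := y) (v := v)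
        omega
      refine ⟨.cons haxu (.cons hauv (.cons havy .nil)), ?_, ?_⟩
      · simp [Walk.isPath_def, hxu, hxv, hxy, hvne, hyu, hyv,
          Ne.symm hyu, Ne.symm hyv, Ne.symm hxy]
      · simp [cu2 x hxv, cuv, cv y hyu]
    · -- x - u - v - b - y
      have havb : Gᶜ.Adj v b := by
        refine ca ?_
        have := SimpleGraph.dist_comm (G := G) (u := b) (v := v); omega
      have haby : Gᶜ.Adj b y := by
        refine ca ?_
        have := tri u b y
        omega
      have hxb : x ≠ b := by intro h; rw [h] at h1; omega
      have hby : b ≠ y := by intro h; rw [h] at hdub; omega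
      refine ⟨.cons haxu (.cons hauv (.cons havb (.cons haby .nil))), ?_, ?_⟩
      · simp [Walk.isPath_def, hxu, hxv, hxy, hxb, hvne, hyu, hyv, hbu, hbv, hby,
          Ne.symm hyu, Ne.symm hyv, Ne.symm hxy, Ne.symm hxb, Ne.symm hbu, Ne.symm hbv]
      · simp [cu2 x hxv, cuv, cv b hbu, cb y hyu hyv]
  · -- dist u x = 1
    have hx1 : G.dist u x = 1 := by omega
    have haxv : Gᶜ.Adj x v := by
      refine ca ?_
      have := tri u x v
      have := SimpleGraph.dist_comm (G := G) (u := x) (v := v)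
      omega
    have havu : Gᶜ.Adj v u := by
      refine ca ?_
      have := SimpleGraph.dist_comm (G := G) (u := u) (v := v); omega
    by_cases h2 : 2 ≤ G.dist u y
    · -- x - v - u - y
      have hauy : Gᶜ.Adj u y := ca h2
      refine ⟨.cons haxv (.cons havu (.cons hauy .nil)), ?_, ?_⟩
      · simp [Walk.isPath_def, hxu, hxv, hxy, hvne, hyu, hyv,
          Ne.symm hvne, Ne.symm hyu, Ne.symm hyv, Ne.symm hxy]
      · simp [cv2 x hxu, cvu, cu y hyv]
    · -- x - v - u - b' - y
      have hy1 : G.dist u y = 1 := by omega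
      have haub' : Gᶜ.Adj u b' := ca (by omega)
      have hab'y : Gᶜ.Adj b' y := by
        refine ca ?_
        have h3 := tri u y b'
        have := SimpleGraph.dist_comm (G := G) (u := y) (v := b')
        omega
      have hxb' : x ≠ b' := by intro h; rw [h] at hx1; omega
      have hb'y : b' ≠ y := by intro h; rw [h] at hdub'; omega
      refine ⟨.cons haxv (.cons havu (.cons haub' (.cons hab'y .nil))), ?_, ?_⟩
      · simp [Walk.isPath_def, hxu, hxv, hxy, hxb', hvne, hyu, hyv, hb'u, hb'v, hb'y,
          Ne.symm hvne, Ne.symm hyu, Ne.symm hyv, Ne.symm hxy, Ne.symm hxb',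
          Ne.symm hb'u, Ne.symm hb'v]
      · simp [cv2 x hxu, cvu, cu b' hb'v, cb' y hyu hyv]

/-- if G is connected with diam(G) ≥ 4, then the complement is connected
and rc(complement) ≤ 4. -/
theorem rc_compl_le_four_of_diam_ge_four {V : Type*} [Fintype V] (G : SimpleGraph V)
    (hG : G.Connected) (hd : 4 ≤ G.diam) :
    Gᶜ.Connected ∧ (Gᶜ.Connected → rc Gᶜ ≤ 4) := by
  classical
  haveI hne : Nonempty V := hG.nonempty
  obtain ⟨u, v, huv⟩ := G.exists_dist_eq_diam
  have huv4 : 4 ≤ G.dist u v := by omega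
  obtain ⟨c, hc4, hrc⟩ := rainbow_aux G hG u v huv4
  have hconn : Gᶜ.Connected := by
    rw [SimpleGraph.connected_iff]
    refine ⟨fun x y => ?_, hne⟩
    obtain ⟨p, -, -⟩ := hrc x y
    exact ⟨p⟩
  refine ⟨hconn, fun _ => ?_⟩
  exact Nat.sInf_le ⟨c, fun e _ => hc4 e, hrc⟩
end

section
/- If G is a tree that is not a star, then the complement of G is connected and rc(complement of G) ≤ 3. -/
open SimpleGraph

section Aux
variable {V : Type*} {G : SimpleGraph V}

/-- In a tree, every path between two vertices has length equal to the distance. -/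
lemma tree_path_length (hT : G.IsTree) {u v : V} (p : G.Walk u v) (hp : p.IsPath) :
    p.length = G.dist u v := by
  obtain ⟨q, hq, hqlen⟩ := (hT.isConnected u v).exists_path_of_dist
  obtain ⟨p₀, hp₀, huniq⟩ := hT.existsUnique_path u v
  rw [huniq p hp, ← huniq q hq, hqlen]

/-- In a tree, distances to a root of adjacent vertices differ by exactly one. -/
lemma tree_adj_dist (hT : G.IsTree) {r x y : V} (h : G.Adj x y) :
    G.dist r y = G.dist r x + 1 ∨ G.dist r x = G.dist r y + 1 := by
  classical
  obtain ⟨p, hp, _⟩ := hT.existsUnique_path r x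
  by_cases hy : y ∈ p.support
  · right
    have hsplit := p.take_spec hy
    have hlen : (p.takeUntil y hy).length + (p.dropUntil y hy).length = p.length := by
      rw [← SimpleGraph.Walk.length_append, hsplit]
    have h1 : (p.takeUntil y hy).length = G.dist r y :=
      tree_path_length hT _ (hp.takeUntil hy)
    have h2 : (p.dropUntil y hy).length = G.dist y x :=
      tree_path_length hT _ (hp.dropUntil hy)
    have h3 : G.dist y x = 1 := by
      have hsingle : (SimpleGraph.Walk.cons h.symm SimpleGraph.Walk.nil : G.Walk y x).IsPath := by
        simp [SimpleGraph.Walk.cons_isPath_iff, h.ne']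
      have := tree_path_length hT _ hsingle
      simpa using this.symm
    have h4 : p.length = G.dist r x := tree_path_length hT p hp
    omega
  · left
    have hcons : (SimpleGraph.Walk.cons h.symm p.reverse : G.Walk y r).IsPath := by
      rw [SimpleGraph.Walk.cons_isPath_iff]
      exact ⟨hp.reverse, by simpa [SimpleGraph.Walk.support_reverse] using hy⟩
    have := tree_path_length hT _ hcons
    simp only [SimpleGraph.Walk.length_cons, SimpleGraph.Walk.length_reverse] at this
    have h4 : p.length = G.dist r x := tree_path_length hT p hp
    rw [SimpleGraph.dist_comm] at this
    omega

lemma tree_adj_parity (hT : G.IsTree) {r x y : V} (h : G.Adj x y) :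
    Even (G.dist r x) ↔ ¬ Even (G.dist r y) := by
  rcases tree_adj_dist hT (r := r) h with h1 | h1 <;> rw [h1] <;> simp [Nat.even_add_one]

end Aux

section Main
variable {V : Type*} {G : SimpleGraph V}

/-- The key construction: a 3-coloring rainbow-connecting the complement. -/
lemma key_coloring (G : SimpleGraph V) (hT : G.IsTree)
    (hstar : ¬ ∃ v : V, ∀ u : V, u ≠ v → G.Adj v u) :
    ∃ c : Sym2 V → ℕ, (∀ e, c e < 3) ∧ RainbowConnected Gᶜ c := by
  classical
  obtain ⟨r⟩ := hT.isConnected.nonempty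
  set P : V → Prop := fun x => Even (G.dist r x) with hP
  have parity : ∀ x y, G.Adj x y → (P x ↔ ¬ P y) := fun x y h => tree_adj_parity hT h
  -- vertices in the same class are never adjacent in G
  have same_class : ∀ x y, P x → P y → ¬ G.Adj x y := by
    intro x y hx hy hadj
    exact ((parity x y hadj).mp hx) hy
  have same_class' : ∀ x y, ¬ P x → ¬ P y → ¬ G.Adj x y := by
    intro x y hx hy hadj
    exact hx ((parity x y hadj).mpr hy)
  -- the coloring
  refine ⟨Sym2.lift ⟨fun x y => if P x then (if P y then 0 else 2) else (if P y then 2 else 1),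
      ?_⟩, ?_, ?_⟩
  · intro x y
    by_cases hx : P x <;> by_cases hy : P y <;> simp [hx, hy]
  · intro e
    induction e using Sym2.ind with
    | _ x y => by_cases hx : P x <;> by_cases hy : P y <;> simp [hx, hy]
  · -- rainbow connectivity
    set c : Sym2 V → ℕ := Sym2.lift ⟨fun x y =>
        if P x then (if P y then 0 else 2) else (if P y then 2 else 1), by
      intro x y; by_cases hx : P x <;> by_cases hy : P y <;> simp [hx, hy]⟩ with hc
    have c00 : ∀ x y, P x → P y → c s(x, y) = 0 := by intro x y hx hy; simp [hc, hx, hy]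
    have c11 : ∀ x y, ¬ P x → ¬ P y → c s(x, y) = 1 := by intro x y hx hy; simp [hc, hx, hy]
    have c2 : ∀ x y, P x → ¬ P y → c s(x, y) = 2 := by intro x y hx hy; simp [hc, hx, hy]
    have c2' : ∀ x y, ¬ P x → P y → c s(x, y) = 2 := by intro x y hx hy; simp [hc, hx, hy]
    -- the hard case, as a symmetric-in-roles statement
    have hard : ∀ u v : V, P u → ¬ P v → G.Adj u v →
        ∃ p : Gᶜ.Walk u v, p.IsPath ∧ (p.edges.map c).Nodup := by
      intro u v hu hv hadj
      have huv : u ≠ v := fun h => hv (h ▸ hu)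
      by_cases hcase1 : ∃ a, P a ∧ a ≠ u ∧ ¬ G.Adj a v
      · obtain ⟨a, ha, hau, hav⟩ := hcase1
        have hav' : a ≠ v := fun h => hv (h ▸ ha)
        have e1 : Gᶜ.Adj u a := ⟨Ne.symm hau, same_class u a hu ha⟩
        have e2 : Gᶜ.Adj a v := ⟨hav', hav⟩
        refine ⟨Walk.cons e1 (Walk.cons e2 Walk.nil), ?_, ?_⟩
        · simp [Walk.cons_isPath_iff, hau.symm, huv, hav']
        · simp [c00 u a hu ha, c2 a v ha hv]
      by_cases hcase2 : ∃ b, ¬ P b ∧ b ≠ v ∧ ¬ G.Adj u b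
      · obtain ⟨b, hb, hbv, hub⟩ := hcase2
        have hub' : u ≠ b := fun h => hb (h ▸ hu)
        have e1 : Gᶜ.Adj u b := ⟨hub', hub⟩
        have e2 : Gᶜ.Adj b v := ⟨hbv, same_class' b v hb hv⟩
        refine ⟨Walk.cons e1 (Walk.cons e2 Walk.nil), ?_, ?_⟩
        · simp [Walk.cons_isPath_iff, hub', huv, hbv]
        · simp [c2 u b hu hb, c11 b v hb hv]
      push_neg at hcase1 hcase2
      -- every P-vertex other than u is adjacent to v; every ¬P-vertex other than v adjacent to u
      obtain ⟨w, hwv, hvw⟩ : ∃ w, w ≠ v ∧ ¬ G.Adj v w := by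
        by_contra hcon
        push_neg at hcon
        exact hstar ⟨v, fun x hx => hcon x hx⟩
      obtain ⟨z, hzu, huz⟩ : ∃ z, z ≠ u ∧ ¬ G.Adj u z := by
        by_contra hcon
        push_neg at hcon
        exact hstar ⟨u, fun x hx => hcon x hx⟩
      have hw : ¬ P w := by
        intro hPw
        have hwu : w ≠ u := by rintro rfl; exact hvw hadj.symm
        exact hvw (hcase1 w hPw hwu).symm
      have hz : P z := by
        by_contra hPz
        have hzv : z ≠ v := by rintro rfl; exact huz hadj
        exact huz (hcase2 z hPz hzv)
      -- z ≠ w, and z not adjacent to w by path uniqueness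
      have hzw : z ≠ w := fun h => hw (h ▸ hz)
      have hzv : z ≠ v := fun h => hv (h ▸ hz)
      have hwu : w ≠ u := by rintro rfl; exact hw hu
      have hzvAdj : G.Adj z v := hcase1 z hz hzu
      have huwAdj : G.Adj u w := hcase2 w hw hwv
      have hznw : ¬ G.Adj z w := by
        intro hzwAdj
        -- two distinct paths from z to v : the edge, and z-w-u-v
        have p1 : (Walk.cons hzvAdj Walk.nil : G.Walk z v).IsPath := by
          simp [Walk.cons_isPath_iff, hzv]
        have p2 : (Walk.cons hzwAdj (Walk.cons huwAdj.symm (Walk.cons hadj Walk.nil)) :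
            G.Walk z v).IsPath := by
          simp [Walk.cons_isPath_iff, hzw, hzu, hzv, hwu, hwv, huv]
        obtain ⟨p₀, _, huniq⟩ := hT.existsUnique_path z v
        have := (huniq _ p1).trans (huniq _ p2).symm
        have hlen := congrArg Walk.length this
        simp [Walk.length_cons] at hlen
      have hwnv : ¬ G.Adj w v := fun h => hvw h.symm
      have hunz : ¬ G.Adj u z := huz
      have e1 : Gᶜ.Adj u z := ⟨fun h => hzu h.symm, hunz⟩
      have e2 : Gᶜ.Adj z w := ⟨hzw, hznw⟩
      have e3 : Gᶜ.Adj w v := ⟨hwv, hwnv⟩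
      refine ⟨Walk.cons e1 (Walk.cons e2 (Walk.cons e3 Walk.nil)), ?_, ?_⟩
      · have huw : u ≠ w := by rintro rfl; exact hw hu
        simp [Walk.cons_isPath_iff, hzu.symm, huv, hzw, hzv, hwv, huw]
      · simp [c00 u z hu hz, c2 z w hz hw, c11 w v hw hv]
    intro u v
    by_cases huv : u = v
    · subst huv; exact ⟨Walk.nil, by simp, by simp⟩
    by_cases hadj : G.Adj u v
    · by_cases hu : P u
      · have hv : ¬ P v := (parity u v hadj).mp hu
        exact hard u v hu hv hadj
      · have hv : P v := by
          by_contra hv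
          exact hu ((parity u v hadj).mpr hv)
        obtain ⟨p, hp, hnd⟩ := hard v u hv hu hadj.symm
        refine ⟨p.reverse, hp.reverse, ?_⟩
        rw [Walk.edges_reverse, List.map_reverse]
        exact List.nodup_reverse.mpr hnd
    · have e : Gᶜ.Adj u v := ⟨huv, hadj⟩
      exact ⟨Walk.cons e Walk.nil, by simp [Walk.cons_isPath_iff, huv], by simp⟩

end Main

/-- if G is a tree but not a star, then the complement is connected and
rc(complement) ≤ 3. -/
theorem rc_compl_le_three_of_tree_not_star {V : Type*} [Fintype V] (G : SimpleGraph V)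
    (hT : G.IsTree) (hstar : ¬ ∃ v : V, ∀ u : V, u ≠ v → G.Adj v u) :
    Gᶜ.Connected ∧ rc Gᶜ ≤ 3 := by
  obtain ⟨c, hc3, hrc⟩ := key_coloring G hT hstar
  constructor
  · have hne : Nonempty V := hT.isConnected.nonempty
    refine ⟨fun u v => ?_⟩
    obtain ⟨p, _, _⟩ := hrc u v
    exact ⟨p⟩
  · exact Nat.sInf_le ⟨c, fun e _ => hc3 e, hrc⟩
end

section
/- If G is a graph with h ≥ 2 connected components G_1, ..., G_h having n_1', ..., n_h' vertices respectively, then rc(complement of G) ≤ rc(K_{n_1',...,n_h'}). -/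
open SimpleGraph

/-!
Putting an edge between any two vertices of different components gives a spanning subgraph
of `Gᶜ` isomorphic to `K_{n_1',...,n_h'}`, which is connected since `h ≥ 2`. Adding edges to a
connected graph cannot increase its rainbow connection number: an optimal colouring of the
subgraph, with the new edges coloured arbitrarily among the old colours, still works.
-/

section

variable {V V' ι : Type*}

theorem RainbowConnected.of_injective {G : SimpleGraph V} {c : Sym2 V → ℕ}
    (hG : G.Preconnected) (hc : Function.Injective c) : RainbowConnected G c := by
  classical
  intro u v
  obtain ⟨p, hp⟩ := (hG u v).some.toPath
  exact ⟨p, hp, hp.edges_nodup.map hc⟩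

theorem RainbowConnected.comp_sym2Map {G : SimpleGraph V} {G' : SimpleGraph V'}
    {c : Sym2 V' → ℕ} (φ : G ≃g G') (hc : RainbowConnected G' c) :
    RainbowConnected G (c ∘ Sym2.map φ) := by
  intro u v
  obtain ⟨p, hp, hnodup⟩ := hc (φ u) (φ v)
  refine ⟨(p.map φ.symm.toHom).copy (φ.symm_apply_apply u) (φ.symm_apply_apply v),
    by simpa using hp.map φ.symm.injective, ?_⟩
  simpa [Walk.edges_map, List.map_map, Function.comp_def, Sym2.map_map] using hnodup

theorem exists_rainbowConnected_of_iso {G : SimpleGraph V} {G' : SimpleGraph V'} {n : ℕ}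
    (φ : G ≃g G')
    (h : ∃ c : Sym2 V' → ℕ, (∀ e ∈ G'.edgeSet, c e < n) ∧ RainbowConnected G' c) :
    ∃ c : Sym2 V → ℕ, (∀ e ∈ G.edgeSet, c e < n) ∧ RainbowConnected G c := by
  obtain ⟨c, hcn, hc⟩ := h
  exact ⟨c ∘ Sym2.map φ, fun e he => hcn _ ((Iso.map_mem_edgeSet_iff φ).2 he),
    hc.comp_sym2Map φ⟩

theorem SimpleGraph.Iso.rc_eq [Fintype V] [Fintype V'] {G : SimpleGraph V}
    {G' : SimpleGraph V'} (φ : G ≃g G') : rc G = rc G' := by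
  unfold rc
  congr 1
  ext n
  exact ⟨exists_rainbowConnected_of_iso φ.symm, exists_rainbowConnected_of_iso φ⟩

theorem rc_le_of_le_of_connected [Fintype V] {G H : SimpleGraph V} (hHG : H ≤ G)
    (hH : H.Connected) : rc G ≤ rc H := by
  classical
  have hcolorable :
      ∃ n, ∃ c : Sym2 V → ℕ, (∀ e ∈ H.edgeSet, c e < n) ∧ RainbowConnected H c :=
    ⟨_, fun e => Fintype.equivFin (Sym2 V) e, fun e _ => Fin.is_lt _,
      .of_injective hH.preconnected (Fin.val_injective.comp (Fintype.equivFin _).injective)⟩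
  obtain ⟨c, hcn, hc⟩ :
      ∃ c : Sym2 V → ℕ, (∀ e ∈ H.edgeSet, c e < rc H) ∧ RainbowConnected H c :=
    Nat.sInf_mem hcolorable
  refine Nat.sInf_le ⟨fun e => if c e < rc H then c e else 0, fun e he => ?_, fun u v => ?_⟩
  · dsimp only
    split_ifs with hce
    · exact hce
    -- `G` has an edge, so `H` has one too, and its colour is below `rc H`.
    induction e using Sym2.ind with
    | h u v =>
      have : Nontrivial V := ⟨u, v, G.ne_of_adj he⟩
      obtain ⟨w, hw⟩ := hH.preconnected.exists_adj_of_nontrivial u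
      exact (Nat.zero_le _).trans_lt (hcn s(u, w) hw)
  · obtain ⟨p, hp, hnodup⟩ := hc u v
    refine ⟨p.mapLe hHG, hp.mapLe hHG, ?_⟩
    rwa [Walk.edges_mapLe_eq_edges,
      List.map_congr_left fun e he => if_pos (hcn e (p.edges_subset_edgeSet he))]

theorem connected_comap_top [Nontrivial ι] {σ : V → ι} (hσ : Function.Surjective σ) :
    ((⊤ : SimpleGraph ι).comap σ).Connected := by
  refine (connected_iff _).2 ⟨fun u v => ?_, hσ.nonempty⟩
  by_cases huv : σ u = σ v
  · obtain ⟨i, hi⟩ := exists_ne (σ u)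
    obtain ⟨w, rfl⟩ := hσ i
    exact (Adj.reachable (Ne.symm hi : σ u ≠ σ w)).trans
      (Adj.reachable (huv ▸ hi : σ w ≠ σ v))
  · exact Adj.reachable huv

theorem comap_top_le_compl {G : SimpleGraph V} {σ : V → ι}
    (hσ : ∀ u v, G.Adj u v → σ u = σ v) : (⊤ : SimpleGraph ι).comap σ ≤ Gᶜ :=
  fun u v huv => ⟨huv.ne, fun hG => huv (hσ u v hG)⟩

end

theorem rc_compl_le_rc_completeMultipartite_general {V : Type*} [Fintype V]
    (G : SimpleGraph V) (h : ℕ) (hh : 2 ≤ h) (P : Fin h → Finset V)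
    (hpart : ∀ v : V, ∃! i, v ∈ P i)
    (hconn : ∀ i, (G.induce (P i : Set V)).Connected)
    (hcomp : ∀ u v : V, G.Adj u v → ∀ i, u ∈ P i → v ∈ P i) :
    rc Gᶜ ≤ rc (completeMultipartiteGraph (fun i : Fin h => Fin (P i).card)) := by
  choose σ hσ huniq using hpart
  have hfiber : ∀ v i, v ∈ P i ↔ σ v = i := fun v i =>
    ⟨fun hv => (huniq v i hv).symm, by rintro rfl; exact hσ v⟩
  let f : V ≃ Σ i, Fin (P i).card := (Equiv.sigmaFiberEquiv σ).symm.trans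
    (Equiv.sigmaCongrRight fun i =>
      (Equiv.subtypeEquivRight (hfiber · i)).symm.trans (P i).equivFin)
  have : Nontrivial (Fin h) := Fin.nontrivial_iff_two_le.mpr hh
  have hσsurj : Function.Surjective σ := fun i => by
    obtain ⟨⟨v, hv⟩⟩ := (hconn i).nonempty
    exact ⟨v, (hfiber v i).1 hv⟩
  calc rc Gᶜ ≤ rc ((⊤ : SimpleGraph (Fin h)).comap σ) :=
        rc_le_of_le_of_connected
          (comap_top_le_compl fun u v huv => huniq v _ (hcomp u v huv _ (hσ u)))
          (connected_comap_top hσsurj)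
    _ = _ := (Iso.comap f (completeMultipartiteGraph _)).rc_eq

/-- for G with h ≥ 2 connected components of sizes n i,
rc(complement) ≤ rc of the complete h-partite graph with those part sizes. -/
theorem rc_compl_le_rc_completeMultipartite {V : Type*} [Fintype V] [DecidableEq V]
    (G : SimpleGraph V) (h : ℕ) (hh : 2 ≤ h) (P : Fin h → Finset V)
    (hpart : ∀ v : V, ∃! i, v ∈ P i)
    (hconn : ∀ i, (G.induce (P i : Set V)).Connected)
    (hcomp : ∀ u v : V, G.Adj u v → ∀ i, u ∈ P i → v ∈ P i) :
    rc Gᶜ ≤ rc (completeMultipartiteGraph (fun i : Fin h => Fin (P i).card)) :=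
  rc_compl_le_rc_completeMultipartite_general G h hh P hpart hconn hcomp
end

section
/- Let G be a connected graph whose complement is connected with diameter at least 4. Then rc(G) ≤ 4. -/
open SimpleGraph

/-- G connected, complement connected with diameter ≥ 4, then rc(G) ≤ 4. -/
theorem rc_le_four_of_compl_diam_ge_four {V : Type*} [Fintype V] (G : SimpleGraph V)
    (hG : G.Connected) (hc : Gᶜ.Connected) (hd : 4 ≤ Gᶜ.diam) :
    rc G ≤ 4 := by
  classical
  have hne : Nonempty V := hG.nonempty
  obtain ⟨x, y, hxy4⟩ := Gᶜ.exists_dist_eq_diam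
  rw [← hxy4] at hd
  have key : ∀ p : Gᶜ.Walk x y, 4 ≤ p.length := fun p => le_trans hd (Gᶜ.dist_le p)
  have hxyne : x ≠ y := by
    rintro rfl
    have := key Walk.nil
    simp at this
  have hxy : G.Adj x y := by
    by_contra h
    have := key (Walk.cons (v := y) (by rw [compl_adj]; exact ⟨hxyne, h⟩) Walk.nil)
    simp at this
  have hdom : ∀ z, z ≠ x → z ≠ y → G.Adj x z ∨ G.Adj y z := by
    intro z hzx hzy
    by_contra h
    push_neg at h
    have := key (Walk.cons (v := z) (by rw [compl_adj]; exact ⟨Ne.symm hzx, h.1⟩) <|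
      Walk.cons (v := y) (by rw [compl_adj]; exact ⟨hzy, fun hh => h.2 hh.symm⟩) Walk.nil)
    simp at this
  set A : Set V := {z | z ≠ x ∧ ¬ G.Adj x z} with hA
  set B : Set V := {z | z ≠ y ∧ ¬ G.Adj y z} with hB
  set C : Set V := {z | G.Adj x z ∧ G.Adj y z} with hC
  have hAB : ∀ a ∈ A, ∀ b ∈ B, a ≠ b → G.Adj a b := by
    rintro a ⟨hax, haa⟩ b ⟨hby, hbb⟩ hab
    by_contra h
    have := key (Walk.cons (v := a) (by rw [compl_adj]; exact ⟨Ne.symm hax, haa⟩) <|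
      Walk.cons (v := b) (by rw [compl_adj]; exact ⟨hab, h⟩) <|
      Walk.cons (v := y) (by rw [compl_adj]; exact ⟨hby, fun hh => hbb hh.symm⟩) Walk.nil)
    simp at this
  have hAy : ∀ a ∈ A, G.Adj y a := by
    rintro a ⟨hax, haa⟩
    have hay : a ≠ y := by rintro rfl; exact haa hxy
    exact (hdom a hax hay).resolve_left haa
  have hBx : ∀ b ∈ B, G.Adj x b := by
    rintro b ⟨hby, hbb⟩
    have hbx : b ≠ x := by rintro rfl; exact hbb hxy.symm
    exact (hdom b hbx hby).resolve_right hbb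
  obtain ⟨b0, hb0⟩ : ∃ b, b ∈ B := by
    obtain ⟨w⟩ := hc.preconnected y x
    cases w with
    | nil => exact absurd rfl hxyne.symm
    | cons h p =>
      rw [compl_adj] at h
      exact ⟨_, ⟨Ne.symm h.1, h.2⟩⟩
  obtain ⟨a0, ha0⟩ : ∃ a, a ∈ A := by
    obtain ⟨w⟩ := hc.preconnected x y
    cases w with
    | nil => exact absurd rfl hxyne
    | cons h p =>
      rw [compl_adj] at h
      exact ⟨_, ⟨Ne.symm h.1, h.2⟩⟩
  -- useful disjointness facts
  have hAx : ∀ a ∈ A, a ≠ x := fun a ha => ha.1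
  have hAy' : ∀ a ∈ A, a ≠ y := fun a ha => (hAy a ha).ne'
  have hBy : ∀ b ∈ B, b ≠ y := fun b hb => hb.1
  have hBx' : ∀ b ∈ B, b ≠ x := fun b hb => (hBx b hb).ne'
  have hCx : ∀ z ∈ C, z ≠ x := fun z hz => hz.1.ne'
  have hCy : ∀ z ∈ C, z ≠ y := fun z hz => hz.2.ne'
  have hAnB : ∀ a ∈ A, a ∉ B := fun a ha hb => hb.2 (hAy a ha)
  have hAnC : ∀ a ∈ A, a ∉ C := fun a ha hz => ha.2 hz.1
  have hBnC : ∀ b ∈ B, b ∉ C := fun b hb hz => hb.2 hz.2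
  have hBnA : ∀ b ∈ B, b ∉ A := fun b hb ha => hb.2 (hAy b ha)
  -- the coloring
  set f : V → V → ℕ := fun u v =>
    if (u = x ∧ v = y) ∨ (v = x ∧ u = y) then 0
    else if (u = x ∧ v ∈ B) ∨ (v = x ∧ u ∈ B) ∨ (u = y ∧ v ∈ C) ∨ (v = y ∧ u ∈ C) then 1
    else if (u = x ∧ v ∈ C) ∨ (v = x ∧ u ∈ C) ∨ (u = y ∧ v ∈ A) ∨ (v = y ∧ u ∈ A) then 2
    else 3 with hf
  have hfsymm : ∀ u v, f u v = f v u := by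
    intro u v
    rw [hf]
    exact if_congr (by tauto) rfl (if_congr (by tauto) rfl (if_congr (by tauto) rfl rfl))
  set c : Sym2 V → ℕ := Sym2.lift ⟨f, hfsymm⟩ with hcdef
  have cEval : ∀ u v, c s(u, v) = f u v := fun u v => rfl
  have cswap : ∀ u v, c s(u, v) = c s(v, u) := fun u v => by rw [Sym2.eq_swap]
  -- color evaluation lemmas
  have c_xy : c s(x, y) = 0 := by
    rw [cEval, hf]; beta_reduce; exact if_pos (Or.inl ⟨rfl, rfl⟩)
  have c_xb : ∀ b ∈ B, c s(x, b) = 1 := by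
    intro b hb
    rw [cEval, hf]; beta_reduce
    rw [if_neg (by rintro (⟨-, h⟩ | ⟨-, h⟩); exacts [hBy b hb h, hxyne h]),
      if_pos (Or.inl ⟨rfl, hb⟩)]
  have c_yc : ∀ z ∈ C, c s(y, z) = 1 := by
    intro z hz
    rw [cEval, hf]; beta_reduce
    rw [if_neg (by rintro (⟨h, -⟩ | ⟨h, -⟩); exacts [hxyne h.symm, hCx z hz h]),
      if_pos (Or.inr (Or.inr (Or.inl ⟨rfl, hz⟩)))]
  have c_xc : ∀ z ∈ C, c s(x, z) = 2 := by
    intro z hz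
    rw [cEval, hf]; beta_reduce
    rw [if_neg (by rintro (⟨-, h⟩ | ⟨h, -⟩); exacts [hCy z hz h, hCx z hz h]),
      if_neg (by
        rintro (⟨-, h⟩ | ⟨h, -⟩ | ⟨h, -⟩ | ⟨h, -⟩)
        exacts [hBnC z h hz, hCx z hz h, hxyne h, hCy z hz h]),
      if_pos (Or.inl ⟨rfl, hz⟩)]
  have c_ya : ∀ a ∈ A, c s(y, a) = 2 := by
    intro a ha
    rw [cEval, hf]; beta_reduce
    rw [if_neg (by rintro (⟨h, -⟩ | ⟨h, -⟩); exacts [hxyne h.symm, hAx a ha h]),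
      if_neg (by
        rintro (⟨h, -⟩ | ⟨h, -⟩ | ⟨-, h⟩ | ⟨h, -⟩)
        exacts [hxyne h.symm, hAx a ha h, hAnC a ha h, hAy' a ha h]),
      if_pos (Or.inr (Or.inr (Or.inl ⟨rfl, ha⟩)))]
  have c_ab : ∀ a ∈ A, ∀ b ∈ B, c s(a, b) = 3 := by
    intro a ha b hb
    have h1 := hAx a ha; have h2 := hAy' a ha
    have h3 := hBx' b hb; have h4 := hBy b hb
    rw [cEval, hf]; beta_reduce
    rw [if_neg (by rintro (⟨h, -⟩ | ⟨h, -⟩); exacts [h1 h, h3 h]),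
      if_neg (by rintro (⟨h, -⟩ | ⟨h, -⟩ | ⟨h, -⟩ | ⟨h, -⟩); exacts [h1 h, h3 h, h2 h, h4 h]),
      if_neg (by rintro (⟨h, -⟩ | ⟨h, -⟩ | ⟨h, -⟩ | ⟨h, -⟩); exacts [h1 h, h3 h, h2 h, h4 h])]
  -- all colors are < 4
  have hlt : ∀ e, c e < 4 := by
    intro e
    induction e using Sym2.ind with
    | _ u v =>
      rw [cEval, hf]; beta_reduce
      split_ifs <;> omega
  -- classification of vertices
  have classify : ∀ z, z = x ∨ z = y ∨ z ∈ A ∨ z ∈ B ∨ z ∈ C := by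
    intro z
    by_cases h1 : z = x
    · exact Or.inl h1
    by_cases h2 : z = y
    · exact Or.inr (Or.inl h2)
    rcases hdom z h1 h2 with h | h
    · by_cases h3 : G.Adj y z
      · exact Or.inr (Or.inr (Or.inr (Or.inr ⟨h, h3⟩)))
      · exact Or.inr (Or.inr (Or.inr (Or.inl ⟨h2, h3⟩)))
    · by_cases h3 : G.Adj x z
      · exact Or.inr (Or.inr (Or.inr (Or.inr ⟨h3, h⟩)))
      · exact Or.inr (Or.inr (Or.inl ⟨h1, h3⟩))
  have symmW : ∀ {u v : V}, (∃ p : G.Walk u v, p.IsPath ∧ (p.edges.map c).Nodup) →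
      (∃ p : G.Walk v u, p.IsPath ∧ (p.edges.map c).Nodup) := by
    rintro u v ⟨p, hp, hn⟩
    exact ⟨p.reverse, hp.reverse, by
      rw [Walk.edges_reverse, List.map_reverse, List.nodup_reverse]; exact hn⟩
  have pe : ∀ {u v : V}, G.Adj u v → ∃ p : G.Walk u v, p.IsPath ∧ (p.edges.map c).Nodup :=
    fun h => ⟨Walk.cons h Walk.nil, by simp [Walk.isPath_def, h.ne], by simp⟩
  have p2 : ∀ {u w v : V}, G.Adj u w → G.Adj w v → u ≠ v → c s(u, w) ≠ c s(w, v) →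
      ∃ p : G.Walk u v, p.IsPath ∧ (p.edges.map c).Nodup := by
    intro u w v h1 h2 hne hcne
    exact ⟨Walk.cons h1 (Walk.cons h2 Walk.nil),
      by simp [Walk.isPath_def, h1.ne, h2.ne, hne], by simp [hcne]⟩
  have pAA : ∀ u ∈ A, ∀ v ∈ A, u ≠ v →
      ∃ p : G.Walk u v, p.IsPath ∧ (p.edges.map c).Nodup := by
    intro u hu v hv huv
    have hub : u ≠ b0 := fun h => hAnB u hu (h ▸ hb0)
    have hvb : b0 ≠ v := fun h => hBnA b0 hb0 (h ▸ hv)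
    refine ⟨Walk.cons (hAB u hu b0 hb0 hub) (Walk.cons (hBx b0 hb0).symm
      (Walk.cons hxy (Walk.cons (hAy v hv) Walk.nil))), ?_, ?_⟩
    · simp [Walk.isPath_def, hub, hvb, hAx u hu, hAy' u hu, huv, hBx' b0 hb0,
        hBy b0 hb0, hxyne, Ne.symm (hAx v hv), Ne.symm (hAy' v hv)]
    · simp only [Walk.edges_cons, Walk.edges_nil, List.map_cons, List.map_nil]
      rw [c_ab u hu b0 hb0, cswap b0 x, c_xb b0 hb0, c_xy, c_ya v hv]
      decide
  have pBB : ∀ u ∈ B, ∀ v ∈ B, u ≠ v →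
      ∃ p : G.Walk u v, p.IsPath ∧ (p.edges.map c).Nodup := by
    intro u hu v hv huv
    have hua : u ≠ a0 := fun h => hBnA u hu (h ▸ ha0)
    have hva : a0 ≠ v := fun h => hAnB a0 ha0 (h ▸ hv)
    refine ⟨Walk.cons (hAB a0 ha0 u hu (Ne.symm hua)).symm (Walk.cons (hAy a0 ha0).symm
      (Walk.cons hxy.symm (Walk.cons (hBx v hv) Walk.nil))), ?_, ?_⟩
    · simp [Walk.isPath_def, hua, hva, hBx' u hu, hBy u hu, huv, hAx a0 ha0,
        hAy' a0 ha0, Ne.symm hxyne, Ne.symm (hBx' v hv), Ne.symm (hBy v hv)]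
    · simp only [Walk.edges_cons, Walk.edges_nil, List.map_cons, List.map_nil]
      rw [cswap u a0, c_ab a0 ha0 u hu, cswap a0 y, c_ya a0 ha0, cswap y x, c_xy,
        c_xb v hv]
      decide
  have pCC : ∀ u ∈ C, ∀ v ∈ C, u ≠ v →
      ∃ p : G.Walk u v, p.IsPath ∧ (p.edges.map c).Nodup := by
    intro u hu v hv huv
    refine ⟨Walk.cons hu.1.symm (Walk.cons hxy (Walk.cons hv.2 Walk.nil)), ?_, ?_⟩
    · simp [Walk.isPath_def, hCx u hu, hCy u hu, huv, hxyne, Ne.symm (hCx v hv),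
        Ne.symm (hCy v hv)]
    · simp only [Walk.edges_cons, Walk.edges_nil, List.map_cons, List.map_nil]
      rw [cswap u x, c_xc u hu, c_xy, c_yc v hv]
      decide
  have pXA : ∀ v ∈ A, ∃ p : G.Walk x v, p.IsPath ∧ (p.edges.map c).Nodup := by
    intro v hv
    refine p2 hxy (hAy v hv) (Ne.symm (hAx v hv)) ?_
    rw [c_xy, c_ya v hv]; decide
  have pYB : ∀ v ∈ B, ∃ p : G.Walk y v, p.IsPath ∧ (p.edges.map c).Nodup := by
    intro v hv
    refine p2 hxy.symm (hBx v hv) (Ne.symm (hBy v hv)) ?_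
    rw [cswap y x, c_xy, c_xb v hv]; decide
  have pAC : ∀ u ∈ A, ∀ v ∈ C, ∃ p : G.Walk u v, p.IsPath ∧ (p.edges.map c).Nodup := by
    intro u hu v hv
    have : u ≠ v := fun h => hAnC u hu (h ▸ hv)
    refine p2 (hAy u hu).symm hv.2 this ?_
    rw [cswap u y, c_ya u hu, c_yc v hv]; decide
  have pBC : ∀ u ∈ B, ∀ v ∈ C, ∃ p : G.Walk u v, p.IsPath ∧ (p.edges.map c).Nodup := by
    intro u hu v hv
    have : u ≠ v := fun h => hBnC u hu (h ▸ hv)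
    refine p2 (hBx u hu).symm hv.1 this ?_
    rw [cswap u x, c_xb u hu, c_xc v hv]; decide
  have hrb : RainbowConnected G c := by
    intro u v
    by_cases huv : u = v
    · exact huv ▸ ⟨Walk.nil, by simp, by simp⟩
    rcases classify u with rfl | rfl | hu | hu | hu <;>
      rcases classify v with rfl | rfl | hv | hv | hv
    · exact absurd rfl huv
    · exact pe hxy
    · exact pXA v hv
    · exact pe (hBx v hv)
    · exact pe hv.1
    · exact symmW (pe hxy)
    · exact absurd rfl huv
    · exact pe (hAy v hv)
    · exact pYB v hv
    · exact pe hv.2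
    · exact symmW (pXA u hu)
    · exact symmW (pe (hAy u hu))
    · exact pAA u hu v hv huv
    · exact pe (hAB u hu v hv huv)
    · exact pAC u hu v hv
    · exact symmW (pe (hBx u hu))
    · exact symmW (pYB u hu)
    · exact symmW (pe (hAB v hv u hu (Ne.symm huv)))
    · exact pBB u hu v hv huv
    · exact pBC u hu v hv
    · exact symmW (pe hu.1)
    · exact symmW (pe hu.2)
    · exact symmW (pAC v hv u hu)
    · exact symmW (pBC v hv u hu)
    · exact pCC u hu v hv huv
  exact Nat.sInf_le ⟨c, fun e _ => hlt e, hrb⟩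
end

section
/- Let G be a connected graph such that the complement of G does not have diameter 2 or 3, and the complement of G does not consist of exactly two connected components one of which is a single vertex. Then rc(G) ≤ 4. -/
open SimpleGraph

/- ### Auxiliary color tables -/

/-- Color table for the bipartite-type coloring. -/
def tb2 (a b : ℕ) : ℕ :=
  if a = 0 then (if b = 2 then 0 else if b = 3 then 1 else 0)
  else if a = 1 then (if b = 2 then 2 else if b = 3 then 3 else 0)
  else 0

def F2 (a b : ℕ) : ℕ := tb2 (min a b) (max a b)

lemma F2_comm (a b : ℕ) : F2 a b = F2 b a := by
  unfold F2; rw [min_comm, max_comm]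

lemma F2_lt (a b : ℕ) : F2 a b < 4 := by
  unfold F2 tb2; split_ifs <;> omega

/-- Color table for the diameter-≥-4 coloring. -/
def tb5 (a b : ℕ) : ℕ :=
  if a = 0 then (if b = 2 then 1 else if b = 3 then 0 else if b = 4 then 2 else 0)
  else if a = 1 then (if b = 2 then 2 else if b = 3 then 3 else 0)
  else 0

def F5 (a b : ℕ) : ℕ := tb5 (min a b) (max a b)

lemma F5_comm (a b : ℕ) : F5 a b = F5 b a := by
  unfold F5; rw [min_comm, max_comm]

lemma F5_lt (a b : ℕ) : F5 a b < 4 := by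
  unfold F5 tb5; split_ifs <;> omega

lemma label_ne {V : Type*} (ℓ : V → ℕ) {x y : V} {i j : ℕ}
    (hx : ℓ x = i) (hy : ℓ y = j) (hij : i ≠ j) : x ≠ y := by
  rintro rfl; rw [hx] at hy; exact hij hy

/- ### Walk-building helpers -/

section Walks

variable {V : Type*} {G : SimpleGraph V} {c : Sym2 V → ℕ}

lemma walk0 (u : V) : ∃ p : G.Walk u u, p.IsPath ∧ (p.edges.map c).Nodup :=
  ⟨.nil, by simp, by simp⟩

lemma walk1 {u v : V} (h : G.Adj u v) :
    ∃ p : G.Walk u v, p.IsPath ∧ (p.edges.map c).Nodup :=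
  ⟨.cons h .nil, by simp [h.ne], by simp⟩

lemma walk2 {u a v : V} (h1 : G.Adj u a) (h2 : G.Adj a v) (huv : u ≠ v)
    (hcol : c s(u, a) ≠ c s(a, v)) :
    ∃ p : G.Walk u v, p.IsPath ∧ (p.edges.map c).Nodup :=
  ⟨.cons h1 (.cons h2 .nil),
    by simp [Walk.isPath_def, h1.ne, h2.ne, huv],
    by simp [hcol]⟩

lemma walk3 {u a b v : V} (h1 : G.Adj u a) (h2 : G.Adj a b) (h3 : G.Adj b v)
    (hub : u ≠ b) (huv : u ≠ v) (hav : a ≠ v)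
    (hcol : ([c s(u, a), c s(a, b), c s(b, v)] : List ℕ).Nodup) :
    ∃ p : G.Walk u v, p.IsPath ∧ (p.edges.map c).Nodup :=
  ⟨.cons h1 (.cons h2 (.cons h3 .nil)),
    by simp [Walk.isPath_def, h1.ne, h2.ne, h3.ne, hub, huv, hav],
    by simpa using hcol⟩

lemma walk4 {u a b d v : V} (h1 : G.Adj u a) (h2 : G.Adj a b) (h3 : G.Adj b d)
    (h4 : G.Adj d v)
    (hub : u ≠ b) (hud : u ≠ d) (huv : u ≠ v) (had : a ≠ d) (hav : a ≠ v) (hbv : b ≠ v)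
    (hcol : ([c s(u, a), c s(a, b), c s(b, d), c s(d, v)] : List ℕ).Nodup) :
    ∃ p : G.Walk u v, p.IsPath ∧ (p.edges.map c).Nodup :=
  ⟨.cons h1 (.cons h2 (.cons h3 (.cons h4 .nil))),
    by simp [Walk.isPath_def, h1.ne, h2.ne, h3.ne, h4.ne, hub, hud, huv, had, hav, hbv],
    by simpa using hcol⟩

end Walks

/- ### The bipartite-type rainbow coloring -/

lemma rainbow_bip {V : Type*} {G : SimpleGraph V} (ℓ : V → ℕ)
    (hadj : ∀ u v, ℓ u ≤ 1 → 2 ≤ ℓ v → G.Adj u v)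
    (hl : ∀ v, ℓ v ≤ 3)
    (a1 a2 b1 b2 : V) (ha1 : ℓ a1 = 0) (ha2 : ℓ a2 = 1) (hb1 : ℓ b1 = 2) (hb2 : ℓ b2 = 3) :
    RainbowConnected G
      (Sym2.lift ⟨fun u v => F2 (ℓ u) (ℓ v), fun u v => F2_comm (ℓ u) (ℓ v)⟩) := by
  intro u v
  by_cases huv : u = v
  · subst huv; exact walk0 u
  have hu4 := hl u
  have hv4 := hl v
  have hu : ℓ u = 0 ∨ ℓ u = 1 ∨ ℓ u = 2 ∨ ℓ u = 3 := by omega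
  have hv : ℓ v = 0 ∨ ℓ v = 1 ∨ ℓ v = 2 ∨ ℓ v = 3 := by omega
  rcases hu with hu | hu | hu | hu <;> rcases hv with hv | hv | hv | hv
  · -- (0,0) : u - b1 - a2 - b2 - v
    exact walk4 (hadj u b1 (by omega) (by omega))
      ((hadj a2 b1 (by omega) (by omega)).symm)
      (hadj a2 b2 (by omega) (by omega))
      ((hadj v b2 (by omega) (by omega)).symm)
      (label_ne ℓ hu ha2 (by omega)) (label_ne ℓ hu hb2 (by omega)) huv
      (label_ne ℓ hb1 hb2 (by omega)) (label_ne ℓ hb1 hv (by omega))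
      (label_ne ℓ ha2 hv (by omega))
      (by simp only [Sym2.lift_mk, hu, hv, ha2, hb1, hb2]; decide)
  · -- (0,1) : u - b1 - v
    exact walk2 (hadj u b1 (by omega) (by omega)) ((hadj v b1 (by omega) (by omega)).symm)
      huv (by simp only [Sym2.lift_mk, hu, hv, hb1]; decide)
  · exact walk1 (hadj u v (by omega) (by omega))
  · exact walk1 (hadj u v (by omega) (by omega))
  · -- (1,0) : u - b1 - v
    exact walk2 (hadj u b1 (by omega) (by omega)) ((hadj v b1 (by omega) (by omega)).symm)
      huv (by simp only [Sym2.lift_mk, hu, hv, hb1]; decide)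
  · -- (1,1) : u - b1 - a1 - b2 - v
    exact walk4 (hadj u b1 (by omega) (by omega))
      ((hadj a1 b1 (by omega) (by omega)).symm)
      (hadj a1 b2 (by omega) (by omega))
      ((hadj v b2 (by omega) (by omega)).symm)
      (label_ne ℓ hu ha1 (by omega)) (label_ne ℓ hu hb2 (by omega)) huv
      (label_ne ℓ hb1 hb2 (by omega)) (label_ne ℓ hb1 hv (by omega))
      (label_ne ℓ ha1 hv (by omega))
      (by simp only [Sym2.lift_mk, hu, hv, ha1, hb1, hb2]; decide)
  · exact walk1 (hadj u v (by omega) (by omega))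
  · exact walk1 (hadj u v (by omega) (by omega))
  · exact walk1 ((hadj v u (by omega) (by omega)).symm)
  · exact walk1 ((hadj v u (by omega) (by omega)).symm)
  · -- (2,2) : u - a1 - b2 - a2 - v
    exact walk4 ((hadj a1 u (by omega) (by omega)).symm)
      (hadj a1 b2 (by omega) (by omega))
      ((hadj a2 b2 (by omega) (by omega)).symm)
      (hadj a2 v (by omega) (by omega))
      (label_ne ℓ hu hb2 (by omega)) (label_ne ℓ hu ha2 (by omega)) huv
      (label_ne ℓ ha1 ha2 (by omega)) (label_ne ℓ ha1 hv (by omega))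
      (label_ne ℓ hb2 hv (by omega))
      (by simp only [Sym2.lift_mk, hu, hv, ha1, ha2, hb2]; decide)
  · -- (2,3) : u - a1 - v
    exact walk2 ((hadj a1 u (by omega) (by omega)).symm) (hadj a1 v (by omega) (by omega))
      huv (by simp only [Sym2.lift_mk, hu, hv, ha1]; decide)
  · exact walk1 ((hadj v u (by omega) (by omega)).symm)
  · exact walk1 ((hadj v u (by omega) (by omega)).symm)
  · -- (3,2) : u - a1 - v
    exact walk2 ((hadj a1 u (by omega) (by omega)).symm) (hadj a1 v (by omega) (by omega))
      huv (by simp only [Sym2.lift_mk, hu, hv, ha1]; decide)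
  · -- (3,3) : u - a1 - b1 - a2 - v
    exact walk4 ((hadj a1 u (by omega) (by omega)).symm)
      (hadj a1 b1 (by omega) (by omega))
      ((hadj a2 b1 (by omega) (by omega)).symm)
      (hadj a2 v (by omega) (by omega))
      (label_ne ℓ hu hb1 (by omega)) (label_ne ℓ hu ha2 (by omega)) huv
      (label_ne ℓ ha1 ha2 (by omega)) (label_ne ℓ ha1 hv (by omega))
      (label_ne ℓ hb1 hv (by omega))
      (by simp only [Sym2.lift_mk, hu, hv, ha1, ha2, hb1]; decide)

/- ### The diameter ≥ 4 rainbow coloring -/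

lemma rainbow_diam {V : Type*} {G : SimpleGraph V} (ℓ : V → ℕ) (x y a' m' : V)
    (hx : ℓ x = 0) (hy : ℓ y = 2) (ha' : ℓ a' = 1) (hm' : ℓ m' = 3)
    (hx' : ∀ v, ℓ v = 0 → v = x) (hy' : ∀ v, ℓ v = 2 → v = y)
    (hl : ∀ v, ℓ v ≤ 4)
    (hAM : ∀ u v, ℓ u ≤ 1 → (ℓ v = 2 ∨ ℓ v = 3) → G.Adj u v)
    (hxR : ∀ v, ℓ v = 4 → G.Adj x v)
    (hyR : ∀ v, ℓ v = 4 → G.Adj y v) :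
    RainbowConnected G
      (Sym2.lift ⟨fun u v => F5 (ℓ u) (ℓ v), fun u v => F5_comm (ℓ u) (ℓ v)⟩) := by
  intro u v
  by_cases huv : u = v
  · subst huv; exact walk0 u
  have hu5 := hl u
  have hv5 := hl v
  have hu : ℓ u = 0 ∨ ℓ u = 1 ∨ ℓ u = 2 ∨ ℓ u = 3 ∨ ℓ u = 4 := by omega
  have hv : ℓ v = 0 ∨ ℓ v = 1 ∨ ℓ v = 2 ∨ ℓ v = 3 ∨ ℓ v = 4 := by omega
  rcases hu with hu | hu | hu | hu | hu <;> rcases hv with hv | hv | hv | hv | hv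
  · -- (0,0) impossible
    exact absurd ((hx' u hu).trans (hx' v hv).symm) huv
  · -- (0,1) : u - y - v
    exact walk2 (hAM u y (by omega) (Or.inl hy)) ((hAM v y (by omega) (Or.inl hy)).symm)
      huv (by simp only [Sym2.lift_mk, hu, hv, hy]; decide)
  · exact walk1 (hAM u v (by omega) (Or.inl hv))
  · exact walk1 (hAM u v (by omega) (Or.inr hv))
  · -- (0,4) : edge
    exact (hx' u hu) ▸ walk1 (hxR v hv)
  · -- (1,0) : u - y - v
    exact walk2 (hAM u y (by omega) (Or.inl hy)) ((hAM v y (by omega) (Or.inl hy)).symm)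
      huv (by simp only [Sym2.lift_mk, hu, hv, hy]; decide)
  · -- (1,1) : u - y - x - m' - v
    exact walk4 (hAM u y (by omega) (Or.inl hy)) ((hAM x y (by omega) (Or.inl hy)).symm)
      (hAM x m' (by omega) (Or.inr hm')) ((hAM v m' (by omega) (Or.inr hm')).symm)
      (label_ne ℓ hu hx (by omega)) (label_ne ℓ hu hm' (by omega)) huv
      (label_ne ℓ hy hm' (by omega)) (label_ne ℓ hy hv (by omega))
      (label_ne ℓ hx hv (by omega))
      (by simp only [Sym2.lift_mk, hu, hv, hx, hy, hm']; decide)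
  · exact walk1 (hAM u v (by omega) (Or.inl hv))
  · exact walk1 (hAM u v (by omega) (Or.inr hv))
  · -- (1,4) : u - y - v
    exact walk2 (hAM u y (by omega) (Or.inl hy)) (hyR v hv)
      huv (by simp only [Sym2.lift_mk, hu, hv, hy]; decide)
  · exact walk1 ((hAM v u (by omega) (Or.inl hu)).symm)
  · exact walk1 ((hAM v u (by omega) (Or.inl hu)).symm)
  · -- (2,2) impossible
    exact absurd ((hy' u hu).trans (hy' v hv).symm) huv
  · -- (2,3) : u - x - v
    exact walk2 ((hAM x u (by omega) (Or.inl hu)).symm) (hAM x v (by omega) (Or.inr hv))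
      huv (by simp only [Sym2.lift_mk, hu, hv, hx]; decide)
  · -- (2,4) : edge
    exact (hy' u hu) ▸ walk1 (hyR v hv)
  · exact walk1 ((hAM v u (by omega) (Or.inr hu)).symm)
  · exact walk1 ((hAM v u (by omega) (Or.inr hu)).symm)
  · -- (3,2) : u - x - v
    exact walk2 ((hAM x u (by omega) (Or.inr hu)).symm) (hAM x v (by omega) (Or.inl hv))
      huv (by simp only [Sym2.lift_mk, hu, hv, hx]; decide)
  · -- (3,3) : u - x - y - a' - v
    exact walk4 ((hAM x u (by omega) (Or.inr hu)).symm) (hAM x y (by omega) (Or.inl hy))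
      ((hAM a' y (by omega) (Or.inl hy)).symm) (hAM a' v (by omega) (Or.inr hv))
      (label_ne ℓ hu hy (by omega)) (label_ne ℓ hu ha' (by omega)) huv
      (label_ne ℓ hx ha' (by omega)) (label_ne ℓ hx hv (by omega))
      (label_ne ℓ hy hv (by omega))
      (by simp only [Sym2.lift_mk, hu, hv, hx, hy, ha']; decide)
  · -- (3,4) : u - x - v
    exact walk2 ((hAM x u (by omega) (Or.inr hu)).symm) (hxR v hv)
      huv (by simp only [Sym2.lift_mk, hu, hv, hx]; decide)
  · -- (4,0) : edge
    exact (hx' v hv) ▸ walk1 ((hxR u hu).symm)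
  · -- (4,1) : u - y - v
    exact walk2 ((hyR u hu).symm) ((hAM v y (by omega) (Or.inl hy)).symm)
      huv (by simp only [Sym2.lift_mk, hu, hv, hy]; decide)
  · -- (4,2) : edge
    exact (hy' v hv) ▸ walk1 ((hyR u hu).symm)
  · -- (4,3) : u - x - v
    exact walk2 ((hxR u hu).symm) (hAM x v (by omega) (Or.inr hv))
      huv (by simp only [Sym2.lift_mk, hu, hv, hx]; decide)
  · -- (4,4) : u - x - y - v
    exact walk3 ((hxR u hu).symm) (hAM x y (by omega) (Or.inl hy)) (hyR v hv)
      (label_ne ℓ hu hy (by omega)) huv (label_ne ℓ hx hv (by omega))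
      (by simp only [Sym2.lift_mk, hu, hv, hx, hy]; decide)

/-- if the complement of G has diameter ≠ 2, 3 and does not consist of
exactly two connected components one of which is a single vertex, then rc(G) ≤ 4. -/
theorem rc_le_four {V : Type*} [Fintype V] (G : SimpleGraph V) (hG : G.Connected)
    (h2 : Gᶜ.diam ≠ 2) (h3 : Gᶜ.diam ≠ 3)
    (hcc : ¬ (Nat.card Gᶜ.ConnectedComponent = 2 ∧
      ∃ v : V, (Gᶜ.connectedComponentMk v).supp = {v})) :
    rc G ≤ 4 := by
  classical
  have hle : ∀ (c : Sym2 V → ℕ), (∀ e ∈ G.edgeSet, c e < 4) → RainbowConnected G c →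
      rc G ≤ 4 := fun c hc1 hc2 => Nat.sInf_le ⟨c, hc1, hc2⟩
  have htriv : (∀ u v : V, u ≠ v → G.Adj u v) → rc G ≤ 4 := by
    intro h
    refine hle (fun _ => 0) (fun e _ => by norm_num) (fun u v => ?_)
    by_cases huv : u = v
    · subst huv; exact walk0 u
    · exact walk1 (h u v huv)
  by_cases hcV : Gᶜ.Connected
  · -- complement connected : diameter must be ≥ 4 (or trivial graph)
    have hne : Nonempty V := hcV.nonempty
    have het : Gᶜ.ediam ≠ ⊤ := by
      obtain ⟨u, v, huv⟩ := Gᶜ.exists_edist_eq_ediam_of_finite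
      rw [← huv]
      exact edist_ne_top_iff_reachable.mpr (hcV.preconnected u v)
    by_cases hd0 : Gᶜ.diam = 0
    · rcases (diam_eq_zero).mp hd0 with h | h
      · exact absurd h het
      · exact htriv fun u v huv => absurd (h.elim u v) huv
    by_cases hd1 : Gᶜ.diam = 1
    · exfalso
      have hnt : Nontrivial V := nontrivial_of_diam_ne_zero hd0
      have hGbot : Gᶜ = ⊤ := diam_eq_one.mp hd1
      obtain ⟨u, v, huv⟩ := hnt.exists_pair_ne
      obtain p := (hG.preconnected u v).some
      cases p with
      | nil => exact huv rfl
      | @cons _ w _ h p =>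
        have hca : Gᶜ.Adj u w := by rw [hGbot]; simpa using h.ne
        exact ((compl_adj G u w).mp hca).2 h
    have hd4 : 4 ≤ Gᶜ.diam := by omega
    obtain ⟨x, y, hxy⟩ := Gᶜ.exists_dist_eq_diam
    have hdist : 4 ≤ Gᶜ.dist x y := hxy ▸ hd4
    have hAdj_dist : ∀ u v : V, Gᶜ.Adj u v → Gᶜ.dist u v ≤ 1 := by
      intro u v h
      simpa using Gᶜ.dist_le h.toWalk
    have htri : ∀ a b c : V, Gᶜ.dist a c ≤ Gᶜ.dist a b + Gᶜ.dist b c := fun _ _ _ => hcV.dist_triangle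
    -- closed neighborhoods labels
    set ℓ : V → ℕ := fun v =>
      if v = x then 0 else if Gᶜ.Adj x v then 1 else
      if v = y then 2 else if Gᶜ.Adj y v then 3 else 4 with hℓ
    have hxyne : x ≠ y := by
      rintro rfl; rw [Gᶜ.dist_self] at hdist; omega
    have hnadjxy : ¬ Gᶜ.Adj x y := by
      intro h; have := hAdj_dist x y h; omega
    -- distance facts from labels
    have hdx : ∀ v, ℓ v ≤ 1 → Gᶜ.dist x v ≤ 1 := by
      intro v hv
      rw [hℓ] at hv; simp only at hv
      split_ifs at hv with e1 e2
      · rw [e1, Gᶜ.dist_self]; omega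
      · exact hAdj_dist x v e2
      all_goals omega
    have hdy : ∀ v, ℓ v = 2 ∨ ℓ v = 3 → Gᶜ.dist v y ≤ 1 := by
      intro v hv
      rw [hℓ] at hv; simp only at hv
      rcases hv with hv | hv <;> split_ifs at hv with e1 e2 e3 e4 <;> try omega
      · rw [e3, Gᶜ.dist_self]; omega
      · have := hAdj_dist y v e4
        rwa [Gᶜ.dist_comm] at this
    have hcompl : ∀ u v : V, u ≠ v → ¬ Gᶜ.Adj u v → G.Adj u v := by
      intro u v h1 h0
      by_contra hA
      exact h0 ((compl_adj G u v).mpr ⟨h1, hA⟩)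
    -- apply rainbow_diam
    refine hle (Sym2.lift ⟨fun u v => F5 (ℓ u) (ℓ v), fun u v => F5_comm (ℓ u) (ℓ v)⟩)
      (fun e _ => ?_) ?_
    · induction e using Sym2.ind with
      | _ a b => rw [Sym2.lift_mk]; exact F5_lt _ _
    obtain ⟨a', haa'⟩ : ∃ a', Gᶜ.Adj x a' := by
      obtain p := (hcV.preconnected x y).some
      cases p with
      | nil => exact absurd rfl hxyne
      | cons h _ => exact ⟨_, h⟩
    obtain ⟨m', hmm'⟩ : ∃ m', Gᶜ.Adj y m' := by
      obtain p := (hcV.preconnected y x).some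
      cases p with
      | nil => exact absurd rfl hxyne.symm
      | cons h _ => exact ⟨_, h⟩
    have hm'x : m' ≠ x := by
      intro he
      have h1 : Gᶜ.dist y x ≤ 1 := hAdj_dist y x (he ▸ hmm')
      rw [Gᶜ.dist_comm] at h1
      omega
    have hm'nadj : ¬ Gᶜ.Adj x m' := by
      intro h
      have h1 := hAdj_dist x m' h
      have h2 := hAdj_dist y m' hmm'
      have := htri x m' y
      rw [SimpleGraph.dist_comm (G := Gᶜ) (u := m') (v := y)] at this
      omega
    refine rainbow_diam ℓ x y a' m' ?_ ?_ ?_ ?_ ?_ ?_ ?_ ?_ ?_ ?_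
    · simp [hℓ]
    · rw [hℓ]; simp only; rw [if_neg hxyne.symm, if_neg hnadjxy]; simp
    · rw [hℓ]; simp only; rw [if_neg haa'.ne', if_pos haa']
    · rw [hℓ]; simp only; rw [if_neg hm'x, if_neg hm'nadj, if_neg hmm'.ne', if_pos hmm']
    · intro v hv
      rw [hℓ] at hv; simp only at hv
      split_ifs at hv <;> first | assumption | omega
    · intro v hv
      rw [hℓ] at hv; simp only at hv
      split_ifs at hv <;> first | assumption | omega
    · intro v
      rw [hℓ]; simp only
      split_ifs <;> omega
    · -- A × M complete in G
      intro u v hu hv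
      have d1 := hdx u hu
      have d2 := hdy v hv
      have hune : u ≠ v := by
        rintro rfl
        have := htri x u y
        omega
      refine hcompl u v hune ?_
      intro hadj
      have d3 := hAdj_dist u v hadj
      have t1 := htri x u y
      have t2 := htri u v y
      omega
    · -- x adjacent to all of R
      intro v hv
      rw [hℓ] at hv; simp only at hv
      split_ifs at hv with e1 e2 e3 e4 <;> try omega
      exact hcompl x v (Ne.symm e1) e2
    · -- y adjacent to all of R
      intro v hv
      rw [hℓ] at hv; simp only at hv
      split_ifs at hv with e1 e2 e3 e4 <;> try omega
      refine hcompl y v (Ne.symm e3) ?_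
      intro h; exact e4 h
  · -- complement disconnected
    by_cases hnV : Nonempty V
    swap
    · exact htriv fun u v _ => absurd (⟨u⟩ : Nonempty V) hnV
    have hpre : ¬ Gᶜ.Preconnected := fun hp => hcV ((Gᶜ.connected_iff).mpr ⟨hp, hnV⟩)
    rw [SimpleGraph.Preconnected] at hpre
    push_neg at hpre
    obtain ⟨u₀, v₀, hnr⟩ := hpre
    by_cases hedge : ∃ p q, Gᶜ.Adj p q
    · obtain ⟨p, q, hpq⟩ := hedge
      by_cases hsep : ∃ r s, ¬ Gᶜ.Reachable p r ∧ ¬ Gᶜ.Reachable p s ∧ r ≠ s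
      · obtain ⟨r, s, hr, hs, hrs⟩ := hsep
        set ℓ : V → ℕ := fun v =>
          if v = p then 0 else if Gᶜ.Reachable p v then 1 else if v = r then 2 else 3
          with hℓ
        have hmem : ∀ v, ℓ v ≤ 1 → Gᶜ.Reachable p v := by
          intro v hv
          rw [hℓ] at hv; simp only at hv
          split_ifs at hv with e1 e2
          · rw [e1]
          · exact e2
          all_goals omega
        have hnmem : ∀ v, 2 ≤ ℓ v → ¬ Gᶜ.Reachable p v := by
          intro v hv
          rw [hℓ] at hv; simp only at hv
          split_ifs at hv with e1 e2 <;> first | omega | exact e2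
        refine hle (Sym2.lift ⟨fun u v => F2 (ℓ u) (ℓ v), fun u v => F2_comm (ℓ u) (ℓ v)⟩)
          (fun e _ => ?_) ?_
        · induction e using Sym2.ind with
          | _ a b => rw [Sym2.lift_mk]; exact F2_lt _ _
        refine rainbow_bip ℓ ?_ ?_ p q r s ?_ ?_ ?_ ?_
        · intro u v hu hv
          have h1 := hmem u hu
          have h2 := hnmem v hv
          have hune : u ≠ v := by rintro rfl; exact h2 h1
          by_contra hA
          have : Gᶜ.Adj u v := (compl_adj G u v).mpr ⟨hune, hA⟩
          exact h2 (h1.trans this.reachable)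
        · intro v; rw [hℓ]; simp only; split_ifs <;> omega
        · simp [hℓ]
        · simp [hℓ, hpq.ne', hpq.reachable]
        · have hrp : r ≠ p := by rintro rfl; exact hr (Reachable.refl _)
          simp [hℓ, hrp, hr]
        · have hsp : s ≠ p := by rintro rfl; exact hs (Reachable.refl _)
          simp [hℓ, hsp, hs, hrs.symm]
      · -- exactly one vertex outside the component of p : excluded configuration
        exfalso
        push_neg at hsep
        have hex : ∃ r, ¬ Gᶜ.Reachable p r := by
          by_cases h : Gᶜ.Reachable p u₀
          · exact ⟨v₀, fun hv => hnr (h.symm.trans hv)⟩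
          · exact ⟨u₀, h⟩
        obtain ⟨r, hr⟩ := hex
        have huniq : ∀ s, ¬ Gᶜ.Reachable p s → s = r := by
          intro s hs
          by_contra hne
          exact hne (hsep r s hr hs).symm
        apply hcc
        constructor
        · rw [Nat.card_eq_two_iff]
          refine ⟨Gᶜ.connectedComponentMk p, Gᶜ.connectedComponentMk r, ?_, ?_⟩
          · intro h
            exact hr (SimpleGraph.ConnectedComponent.eq.mp h)
          · rw [Set.eq_univ_iff_forall]
            intro K
            induction K using SimpleGraph.ConnectedComponent.ind with
            | _ w =>
              by_cases h : Gᶜ.Reachable p w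
              · exact Or.inl (SimpleGraph.ConnectedComponent.eq.mpr h.symm)
              · exact Or.inr (by rw [huniq w h]; rfl)
        · refine ⟨r, ?_⟩
          ext v
          simp only [SimpleGraph.ConnectedComponent.mem_supp_iff, Set.mem_singleton_iff]
          constructor
          · intro h
            have hvr : Gᶜ.Reachable v r := SimpleGraph.ConnectedComponent.eq.mp h
            by_cases hpv : Gᶜ.Reachable p v
            · exact absurd (hpv.trans hvr) hr
            · exact huniq v hpv
          · rintro rfl; rfl
    · -- complement edgeless : G complete
      push_neg at hedge
      apply htriv
      intro u v huv
      by_contra hA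
      exact hedge u v ((compl_adj G u v).mpr ⟨huv, hA⟩)
end

section
/- Let G be a triangle-free connected graph with diameter 2 whose complement is connected. Then rc(complement of G) ≤ 5. -/
open SimpleGraph

private lemma cut_not_reachable {V : Type*} {H : SimpleGraph V} {P : V → Prop}
    (hcross : ∀ x y, P x → ¬P y → ¬H.Adj x y) {u v : V}
    (hr : H.Reachable u v) (hu : P u) (hv : ¬P v) : False := by
  obtain ⟨p⟩ := hr
  induction p with
  | nil => exact hv hu
  | @cons a b c h q ih =>
    by_cases hP : P b
    · exact ih hP hv
    · exact hcross a b hu hP h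

private lemma common_nbr {V : Type*} (G : SimpleGraph V) (hG : G.Connected)
    (hd : G.diam = 2) {u v : V} (hne : u ≠ v) (hna : ¬G.Adj u v) :
    ∃ w, G.Adj u w ∧ G.Adj v w := by
  have hdist : G.dist u v ≤ 2 := by
    rw [← hd]
    exact dist_le_diam (ediam_ne_top_of_diam_ne_zero (by omega))
  obtain ⟨p, hp⟩ := (hG u v).exists_walk_length_eq_dist
  rw [← hp] at hdist
  cases p with
  | nil => exact absurd rfl hne
  | @cons _ b _ h q =>
    cases q with
    | nil => exact absurd h hna
    | @cons _ d _ h2 r =>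
      cases r with
      | nil => exact ⟨b, h, h2.symm⟩
      | cons h3 s => simp [Walk.length_cons] at hdist

private lemma exists_common_nonnbr {V : Type*} (G : SimpleGraph V) (hG : G.Connected)
    (htf : G.CliqueFree 3) (hd : G.diam = 2) (hc : Gᶜ.Connected)
    {u v : V} (huv : G.Adj u v) :
    ∃ w, w ≠ u ∧ w ≠ v ∧ ¬G.Adj u w ∧ ¬G.Adj v w := by
  classical
  have tri : ∀ x y t : V, G.Adj x y → G.Adj x t → G.Adj y t → False := fun x y t h1 h2 h3 =>
    htf {x, y, t} (is3Clique_triple_iff.mpr ⟨h1, h2, h3⟩)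
  by_contra hcon
  push_neg at hcon
  set P : V → Prop := fun x => x = u ∨ G.Adj v x with hP
  have hcross : ∀ x y, P x → ¬P y → ¬Gᶜ.Adj x y := by
    intro x y hx hy hadj
    rw [compl_adj] at hadj
    obtain ⟨hxy, hnadj⟩ := hadj
    have hyu : y ≠ u := fun h => hy (Or.inl h)
    have hvy : ¬G.Adj v y := fun h => hy (Or.inr h)
    by_cases hyv : y = v
    · subst hyv
      rcases hx with rfl | hvx
      · exact hnadj huv
      · exact hnadj hvx.symm
    · have huy : G.Adj u y := by
        by_contra hnuy
        exact hvy (hcon y hyu hyv hnuy)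
      rcases hx with rfl | hvx
      · exact hnadj huy
      · -- x ≠ y, ¬Adj x y: common neighbor t
        obtain ⟨t, hxt, hyt⟩ := common_nbr G hG hd hxy hnadj
        have hvt : ¬G.Adj v t := fun h => tri v x t hvx h hxt
        have hut : ¬G.Adj u t := fun h => tri u y t huy h hyt
        have htv : t ≠ v := fun h => hvy (h ▸ hyt).symm
        have htu : t ≠ u := by
          intro h; subst h
          exact tri t v x huv hxt.symm hvx
        exact hvt (hcon t htu htv hut)
  exact cut_not_reachable hcross (hc.preconnected u v) (Or.inl rfl)
    (by simp [hP, huv.ne', G.irrefl])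

/-- G triangle-free connected with diameter 2 and connected complement,
then rc(complement) ≤ 5. -/
theorem rc_compl_le_five_of_diam_two {V : Type*} [Fintype V] (G : SimpleGraph V)
    (hG : G.Connected) (htf : G.CliqueFree 3) (hd : G.diam = 2) (hc : Gᶜ.Connected) :
    rc Gᶜ ≤ 5 := by
  classical
  have tri : ∀ x y t : V, G.Adj x y → G.Adj x t → G.Adj y t → False := fun x y t h1 h2 h3 =>
    htf {x, y, t} (is3Clique_triple_iff.mpr ⟨h1, h2, h3⟩)
  obtain ⟨z⟩ := hG.nonempty
  obtain ⟨ι, hι⟩ := Countable.exists_injective_nat V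
  set g : V → V := fun b => if h : ∃ a, G.Adj z a ∧ G.Adj b a then h.choose else z with hgdef
  have hgP : ∀ b, b ≠ z → ¬G.Adj z b → G.Adj z (g b) ∧ G.Adj b (g b) := by
    intro b hb1 hb2
    have hex : ∃ a, G.Adj z a ∧ G.Adj b a := common_nbr G hG hd (Ne.symm hb1) hb2
    simp only [hgdef, dif_pos hex]
    exact hex.choose_spec
  set f : V → V → ℕ := fun x y =>
    if x = z ∨ y = z then 4
    else if G.Adj z x ∧ G.Adj z y then 3
    else if G.Adj z x then (if ι x < ι (g y) then 1 else 2)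
    else if G.Adj z y then (if ι y < ι (g x) then 1 else 2)
    else 0 with hfdef
  have hfsymm : ∀ x y, f x y = f y x := by
    intro x y
    simp only [hfdef]
    split_ifs <;> first | rfl | tauto
  set c : Sym2 V → ℕ := Sym2.lift ⟨f, hfsymm⟩ with hcdef
  have hceval : ∀ x y, c s(x, y) = f x y := fun x y => rfl
  have hswap : ∀ x y : V, c s(x, y) = c s(y, x) := by
    intro x y; rw [Sym2.eq_swap]
  -- evaluation lemmas
  have hc4 : ∀ b, b ≠ z → c s(z, b) = 4 := by
    intro b hb; rw [hceval]; simp only [hfdef]; simp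
  have hc3 : ∀ a a', G.Adj z a → G.Adj z a' → c s(a, a') = 3 := by
    intro a a' ha ha'; rw [hceval]; simp only [hfdef]
    rw [if_neg (by push_neg; exact ⟨ha.ne', ha'.ne'⟩), if_pos ⟨ha, ha'⟩]
  have hcab : ∀ a b, G.Adj z a → b ≠ z → ¬G.Adj z b →
      c s(a, b) = if ι a < ι (g b) then 1 else 2 := by
    intro a b ha hb1 hb2; rw [hceval]; simp only [hfdef]
    rw [if_neg (by push_neg; exact ⟨ha.ne', hb1⟩),
      if_neg (by rintro ⟨-, h⟩; exact hb2 h), if_pos ha]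
  have hc0 : ∀ b b', b ≠ z → b' ≠ z → ¬G.Adj z b → ¬G.Adj z b' → c s(b, b') = 0 := by
    intro b b' h1 h2 h3 h4; rw [hceval]; simp only [hfdef]
    rw [if_neg (by push_neg; exact ⟨h1, h2⟩), if_neg (by rintro ⟨h, -⟩; exact h3 h),
      if_neg h3, if_neg h4]
  have hbound : ∀ e ∈ Gᶜ.edgeSet, c e < 5 := by
    intro e _
    induction e with
    | h x y =>
      rw [hceval]; simp only [hfdef]
      split_ifs <;> omega
  have hcompl : ∀ x y : V, x ≠ y → ¬G.Adj x y → Gᶜ.Adj x y := fun x y h1 h2 =>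
    (compl_adj G x y).mpr ⟨h1, h2⟩
  -- the main rainbow-connectivity claim, with symmetry helper
  have good_symm : ∀ u v : V,
      (∃ p : Gᶜ.Walk u v, p.IsPath ∧ (p.edges.map c).Nodup) →
      (∃ p : Gᶜ.Walk v u, p.IsPath ∧ (p.edges.map c).Nodup) := by
    rintro u v ⟨p, hp, hn⟩
    exact ⟨p.reverse, hp.reverse, by simpa [Walk.edges_reverse, List.map_reverse] using hn⟩
  -- main case analysis for G-adjacent pairs
  have hAB : ∀ u v : V, G.Adj u v → G.Adj z u → u ≠ z → v ≠ z → ¬G.Adj z v →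
      ∃ p : Gᶜ.Walk u v, p.IsPath ∧ (p.edges.map c).Nodup := by
    -- u ∈ A, v ∈ B
    intro u v huv hzu _ hvz hzv
    obtain ⟨w, hwu, hwv, hnuw, hnvw⟩ := exists_common_nonnbr G hG htf hd hc huv
    have hwz : w ≠ z := by rintro rfl; exact hnuw hzu.symm
    have h1 : Gᶜ.Adj u w := hcompl u w (Ne.symm hwu) hnuw
    have h2 : Gᶜ.Adj w v := hcompl w v hwv (fun h => hnvw h.symm)
    refine ⟨Walk.cons h1 (Walk.cons h2 Walk.nil), ?_, ?_⟩
    · simp [Walk.isPath_def, huv.ne, Ne.symm hwu, hwv]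
    · simp only [Walk.edges_cons, Walk.edges_nil, List.map_cons, List.map_nil]
      by_cases hzw : G.Adj z w
      · -- w ∈ A
        rw [hc3 u w hzu hzw, hcab w v hzw hvz hzv]
        split_ifs <;> simp
      · -- w ∈ B
        rw [hcab u w hzu hwz hzw, hc0 w v hwz hvz hzw hzv]
        split_ifs <;> simp
  have main : RainbowConnected Gᶜ c := by
    intro u v
    by_cases huv : u = v
    · subst huv; exact ⟨Walk.nil, Walk.IsPath.nil, by simp⟩
    by_cases hadj : Gᶜ.Adj u v
    · exact ⟨Walk.cons hadj Walk.nil, by simp [Walk.isPath_def, hadj.ne], by simp⟩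
    have hGadj : G.Adj u v := by
      by_contra h; exact hadj (hcompl u v huv h)
    -- case on membership
    by_cases huz : u = z
    · -- u = z, v ∈ A
      subst huz
      obtain ⟨w, hwu, hwv, hnuw, hnvw⟩ := exists_common_nonnbr G hG htf hd hc hGadj
      have h1 : Gᶜ.Adj u w := hcompl u w (Ne.symm hwu) hnuw
      have h2 : Gᶜ.Adj w v := hcompl w v hwv (fun h => hnvw h.symm)
      refine ⟨Walk.cons h1 (Walk.cons h2 Walk.nil), ?_, ?_⟩
      · simp [Walk.isPath_def, huv, Ne.symm hwu, hwv]
      · simp only [Walk.edges_cons, Walk.edges_nil, List.map_cons, List.map_nil]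
        rw [hc4 w hwu, hswap w v, hcab v w hGadj hwu hnuw]
        split_ifs <;> simp
    by_cases hvz : v = z
    · subst hvz
      refine good_symm _ _ ?_
      obtain ⟨w, hwv, hwu, hnvw, hnuw⟩ := exists_common_nonnbr G hG htf hd hc hGadj.symm
      have h1 : Gᶜ.Adj v w := hcompl v w (Ne.symm hwv) hnvw
      have h2 : Gᶜ.Adj w u := hcompl w u hwu (fun h => hnuw h.symm)
      refine ⟨Walk.cons h1 (Walk.cons h2 Walk.nil), ?_, ?_⟩
      · simp [Walk.isPath_def, Ne.symm huv, Ne.symm hwv, hwu]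
      · simp only [Walk.edges_cons, Walk.edges_nil, List.map_cons, List.map_nil]
        rw [hc4 w hwv, hswap w u, hcab u w hGadj.symm hwv hnvw]
        split_ifs <;> simp
    -- now u ≠ z, v ≠ z
    by_cases hzu : G.Adj z u <;> by_cases hzv : G.Adj z v
    · exact absurd hGadj (fun h => tri z u v hzu hzv h)
    · exact hAB u v hGadj hzu huz hvz hzv
    · exact good_symm _ _ (hAB v u hGadj.symm hzv hvz huz hzu)
    · -- u, v ∈ B
      obtain ⟨hza1, hua1⟩ := hgP u huz hzu
      obtain ⟨hza2, hva2⟩ := hgP v hvz hzv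
      have ha12 : g u ≠ g v := by
        intro h
        exact tri u v (g u) hGadj hua1 (h ▸ hva2)
      have hnua2 : ¬G.Adj u (g v) := fun h => tri u v (g v) hGadj h hva2
      have hnva1 : ¬G.Adj v (g u) := fun h => tri u v (g u) hGadj hua1 h
      have hna12 : ¬G.Adj (g v) (g u) := fun h => tri z (g v) (g u) hza2 hza1 h
      have hua2 : u ≠ g v := by rintro rfl; exact hzu hza2
      have hva1 : v ≠ g u := by rintro rfl; exact hzv hza1
      have h1 : Gᶜ.Adj u (g v) := hcompl u (g v) hua2 hnua2
      have h2 : Gᶜ.Adj (g v) (g u) := hcompl (g v) (g u) (Ne.symm ha12) hna12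
      have h3 : Gᶜ.Adj (g u) v := hcompl (g u) v (Ne.symm hva1) (fun h => hnva1 h.symm)
      refine ⟨Walk.cons h1 (Walk.cons h2 (Walk.cons h3 Walk.nil)), ?_, ?_⟩
      · have hugu : u ≠ g u := by rintro h; exact hzu (h ▸ hza1)
        have hvgv : v ≠ g v := by rintro h; exact hzv (h ▸ hza2)
        simp [Walk.isPath_def, huv, hua2, hugu, Ne.symm ha12, Ne.symm hvgv, Ne.symm hva1]
      · simp only [Walk.edges_cons, Walk.edges_nil, List.map_cons, List.map_nil]
        rw [hswap u (g v), hcab (g v) u hza2 huz hzu, hc3 (g v) (g u) hza2 hza1,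
          hcab (g u) v hza1 hvz hzv]
        have : ι (g u) ≠ ι (g v) := fun h => ha12 (hι h)
        split_ifs <;> simp <;> omega
  have h5 : 5 ∈ {n | ∃ c : Sym2 V → ℕ, (∀ e ∈ Gᶜ.edgeSet, c e < n) ∧ RainbowConnected Gᶜ c} :=
    ⟨c, hbound, main⟩
  exact Nat.sInf_le h5
end

section
/- Let G be a triangle-free graph with exactly two connected components, one of which is a single vertex and the other nontrivial. Then the complement of G is connected and rc(complement of G) ≤ 6. -/
open SimpleGraph

/-- G triangle-free with exactly two connected components, one a single
vertex and the other nontrivial; then the complement is connected and rc(complement) ≤ 6. -/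
theorem rc_compl_le_six {V : Type*} [Fintype V] (G : SimpleGraph V)
    (htf : G.CliqueFree 3) (hcc : Nat.card G.ConnectedComponent = 2)
    (v : V) (hv : (G.connectedComponentMk v).supp = {v})
    (hnontrivial : 3 ≤ Fintype.card V) :
    Gᶜ.Connected ∧ rc Gᶜ ≤ 6 := by
  classical
  have hvnadj : ∀ x : V, ¬ G.Adj v x := by
    intro x hadj
    have hx : x ∈ (G.connectedComponentMk v).supp := by
      rw [SimpleGraph.ConnectedComponent.mem_supp_iff]
      exact SimpleGraph.ConnectedComponent.sound hadj.symm.reachable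
    rw [hv] at hx
    have : x = v := by simpa using hx
    exact G.irrefl (this ▸ hadj)
  have hvadj : ∀ x : V, x ≠ v → Gᶜ.Adj v x := by
    intro x hx
    rw [SimpleGraph.compl_adj]
    exact ⟨hx.symm, hvnadj x⟩
  obtain ⟨u0, hu0⟩ : ∃ u0 : V, u0 ≠ v :=
    Fintype.exists_ne_of_one_lt_card (by omega) v
  have hconn : Gᶜ.Connected := by
    rw [SimpleGraph.connected_iff]
    constructor
    · intro a b
      have ha : Gᶜ.Reachable v a := by
        by_cases h : a = v
        · subst h; exact SimpleGraph.Reachable.refl _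
        · exact (hvadj a h).reachable
      have hb : Gᶜ.Reachable v b := by
        by_cases h : b = v
        · subst h; exact SimpleGraph.Reachable.refl _
        · exact (hvadj b h).reachable
      exact ha.symm.trans hb
    · exact ⟨v⟩
  refine ⟨hconn, ?_⟩
  apply Nat.sInf_le
  set c : Sym2 V → ℕ := fun e =>
    if v ∈ e ∧ u0 ∈ e then 0 else if v ∈ e then 1 else if u0 ∈ e then 2 else 3 with hc
  have hc0 : ∀ a b : V, (a = v ∧ b = u0) ∨ (a = u0 ∧ b = v) → c s(a, b) = 0 := by
    rintro a b (⟨rfl, rfl⟩ | ⟨rfl, rfl⟩) <;> simp [hc]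
  have hc1 : ∀ a b : V, ((a = v ∨ b = v) ∧ a ≠ u0 ∧ b ≠ u0) → c s(a, b) = 1 := by
    rintro a b ⟨h1, h2, h3⟩
    have : v ∈ s(a, b) := by rcases h1 with rfl | rfl <;> simp
    simp only [hc, Sym2.mem_iff]
    rw [if_neg, if_pos]
    · simpa using this
    · simp only [Sym2.mem_iff] at this ⊢
      push_neg
      intro _
      exact ⟨fun h => h2 h.symm, fun h => h3 h.symm⟩
  have hc2 : ∀ a b : V, ((a = u0 ∨ b = u0) ∧ a ≠ v ∧ b ≠ v) → c s(a, b) = 2 := by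
    rintro a b ⟨h1, h2, h3⟩
    simp only [hc, Sym2.mem_iff]
    rw [if_neg, if_neg, if_pos]
    · rcases h1 with rfl | rfl <;> simp
    · push_neg
      exact ⟨fun h => absurd h.symm h2, fun h => absurd h.symm h3⟩
    · push_neg
      intro h
      exact absurd h (by rcases h with rfl | rfl; exacts [absurd rfl h2, absurd rfl h3])
  refine ⟨c, ?_, ?_⟩
  · intro e _
    simp only [hc]
    split_ifs <;> omega
  · intro a b
    by_cases hab : a = b
    · subst hab
      exact ⟨SimpleGraph.Walk.nil, SimpleGraph.Walk.IsPath.nil, by simp⟩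
    by_cases hacadj : Gᶜ.Adj a b
    · exact ⟨SimpleGraph.Walk.cons hacadj SimpleGraph.Walk.nil, by simp [hab], by simp⟩
    -- now a ≠ b, not adjacent in compl, so G.Adj a b; in particular a ≠ v, b ≠ v
    have hGadj : G.Adj a b := by
      by_contra h
      exact hacadj (by rw [SimpleGraph.compl_adj]; exact ⟨hab, h⟩)
    have hav : a ≠ v := by rintro rfl; exact hvnadj b hGadj
    have hbv : b ≠ v := by rintro rfl; exact hvnadj a hGadj.symm
    by_cases hau : a = u0
    · subst hau
      -- path a - v - b   (a plays the role of u0)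
      refine ⟨SimpleGraph.Walk.cons (hvadj a hu0).symm
        (SimpleGraph.Walk.cons (hvadj b hbv) SimpleGraph.Walk.nil), ?_, ?_⟩
      · simp [hab, hu0, hbv, Ne.symm hbv]
      · have e1 : c s(a, v) = 0 := hc0 a v (Or.inr ⟨rfl, rfl⟩)
        have e2 : c s(v, b) = 1 := hc1 v b ⟨Or.inl rfl, Ne.symm hu0, fun h => hab h.symm⟩
        simp [e1, e2]
    by_cases hbu : b = u0
    · subst hbu
      -- path a - v - b   (b plays the role of u0)
      refine ⟨SimpleGraph.Walk.cons (hvadj a hav).symm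
        (SimpleGraph.Walk.cons (hvadj b hu0) SimpleGraph.Walk.nil), ?_, ?_⟩
      · simp [hab, hav, hu0, Ne.symm hu0]
      · have e1 : c s(a, v) = 1 := hc1 a v ⟨Or.inr rfl, hab, Ne.symm hu0⟩
        have e2 : c s(v, b) = 0 := hc0 v b (Or.inl ⟨rfl, rfl⟩)
        simp [e1, e2]
    -- a, b ∉ {v, u0}; triangle-freeness: u0 not G-adjacent to both a and b
    have htri : ¬ (G.Adj u0 a ∧ G.Adj u0 b) := by
      rintro ⟨h1, h2⟩
      exact htf {u0, a, b} (SimpleGraph.is3Clique_triple_iff.mpr ⟨h1, h2, hGadj⟩)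
    by_cases hu0a : G.Adj u0 a
    · -- then ¬ G.Adj u0 b; path a - v - u0 - b
      have hu0b : ¬ G.Adj u0 b := fun h => htri ⟨hu0a, h⟩
      have hadj3 : Gᶜ.Adj u0 b := by
        rw [SimpleGraph.compl_adj]; exact ⟨fun h => hbu h.symm, hu0b⟩
      refine ⟨SimpleGraph.Walk.cons (hvadj a hav).symm
        (SimpleGraph.Walk.cons (hvadj u0 hu0)
          (SimpleGraph.Walk.cons hadj3 SimpleGraph.Walk.nil)), ?_, ?_⟩
      · simp [hab, hav, hbv, hau, hbu, hu0, Ne.symm hbv, Ne.symm hbu, Ne.symm hu0]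
      · have e1 : c s(a, v) = 1 := hc1 a v ⟨Or.inr rfl, hau, Ne.symm hu0⟩
        have e2 : c s(v, u0) = 0 := hc0 v u0 (Or.inl ⟨rfl, rfl⟩)
        have e3 : c s(u0, b) = 2 := hc2 u0 b ⟨Or.inl rfl, hu0, hbv⟩
        simp [e1, e2, e3]
    · -- path a - u0 - v - b
      have hadj1 : Gᶜ.Adj a u0 := by
        rw [SimpleGraph.compl_adj]; exact ⟨hau, fun h => hu0a h.symm⟩
      refine ⟨SimpleGraph.Walk.cons hadj1
        (SimpleGraph.Walk.cons (hvadj u0 hu0).symm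
          (SimpleGraph.Walk.cons (hvadj b hbv) SimpleGraph.Walk.nil)), ?_, ?_⟩
      · simp [hab, hav, hbv, hau, hbu, hu0, Ne.symm hbv, Ne.symm hbu, Ne.symm hu0]
      · have e1 : c s(a, u0) = 2 := hc2 a u0 ⟨Or.inr rfl, hav, hu0⟩
        have e2 : c s(u0, v) = 0 := hc0 u0 v (Or.inr ⟨rfl, rfl⟩)
        have e3 : c s(v, b) = 1 := hc1 v b ⟨Or.inl rfl, Ne.symm hu0, hbu⟩
        simp [e1, e2, e3]
end
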